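/- arXiv:1911.08812 — 7 statements merged into one kernel-verified Lean document; each statement's English description precedes it below -/
import Mathlib

section
/- Let A be a C*-algebra and E ⊆ A a commutative C*-subalgebra containing an approximate unit for A. Then E_* ⊆ closure(E_{sa•}) (closure in the norm topology). If moreover E is maximal commutative, i.e. every element of A commuting with all elements of E lies in E, then E_* = closure(E_{sa•}). -/
/-!
If `a` is a *-normaliser of `E`, then `c = a⋆a` lies in `E` (it is the limit of `a⋆ e_λ a`), hence
so does `f(c)` for every continuous `f` with `f 0 = 0`. For `ε > 0` take
`g(t) = 1 - ε / max |t| ε` and `q(t) = t / (max |t| ε)²`: then `q(c) c g(c) = g(c)`, and with the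
commutativity of `E` this identity makes `a g(c)` a normaliser of `E_sa` (the witnesses are
`a (e q(c)) a⋆` and `q(c) a⋆ f a`). Moreover `‖a - a g(c)‖² = ‖h(c) c h(c)‖ ≤ ε` for `h = 1 - g`.

Conversely, if `a` normalises `E_sa`, then `a⋆a` commutes with `E_sa`, hence with
`E = E_sa + i E_sa`; under maximality `a⋆a ∈ E`, and `a⋆ e a = a⋆a e'` for `e ∈ E_sa`. Since the
normalisers of `E_sa` are closed under `⋆`, the same applies to `a a⋆`. The *-normalisers form a
closed set, which gives the reverse inclusion of closures.
-/

open Filter Topology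

def starNormalizer {A : Type*} [Mul A] [Star A] (E : Set A) : Set A :=
  {a | ∀ e ∈ E, star a * e * a ∈ E ∧ a * e * star a ∈ E}

def selfAdjointNormalizer {A : Type*} [Mul A] [Star A] (E : Set A) : Set A :=
  {a | (fun x => a * x) '' {e ∈ E | star e = e} = (fun x => x * a) '' {e ∈ E | star e = e}}

section Topological

variable {A : Type*} [Semigroup A] [StarMul A] [TopologicalSpace A] [ContinuousMul A] {E : Set A}

theorem star_mul_self_mem_of_tendsto_mul (hE : IsClosed E) {l : Filter A} [l.NeBot]
    (hlE : ∀ᶠ e in l, e ∈ E) {a : A} (hl : Tendsto (· * a) l (𝓝 a))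
    (ha : a ∈ starNormalizer E) : star a * a ∈ E :=
  hE.mem_of_tendsto (hl.const_mul (star a))
    (hlE.mono fun e he => by simpa only [mul_assoc] using (ha e he).1)

theorem isClosed_starNormalizer [ContinuousStar A] (hE : IsClosed E) :
    IsClosed (starNormalizer E) := by
  simp only [starNormalizer, Set.ofPred_forall, Set.ofPred_and]
  exact isClosed_iInter fun e => isClosed_iInter fun _ =>
    (hE.preimage (by fun_prop)).inter (hE.preimage (by fun_prop))

end Topological

section SelfAdjointNormalizer

variable {A : Type*} [Mul A] [StarMul A] {E : Set A} {a : A}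

theorem exists_mul_eq_mul_of_mem_selfAdjointNormalizer (ha : a ∈ selfAdjointNormalizer E)
    {e : A} (he : e ∈ E) (hesa : IsSelfAdjoint e) :
    ∃ f ∈ E, IsSelfAdjoint f ∧ a * e = f * a := by
  obtain ⟨f, ⟨hf, hfsa⟩, hfe⟩ : a * e ∈ (fun x => x * a) '' {e ∈ E | star e = e} :=
    ha ▸ ⟨e, ⟨he, hesa⟩, rfl⟩
  exact ⟨f, hf, hfsa, hfe.symm⟩

theorem exists_mul_eq_mul_of_mem_selfAdjointNormalizer' (ha : a ∈ selfAdjointNormalizer E)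
    {f : A} (hf : f ∈ E) (hfsa : IsSelfAdjoint f) :
    ∃ e ∈ E, IsSelfAdjoint e ∧ f * a = a * e := by
  obtain ⟨e, ⟨he, hesa⟩, hef⟩ : f * a ∈ (fun x => a * x) '' {e ∈ E | star e = e} :=
    ha.symm ▸ ⟨f, ⟨hf, hfsa⟩, rfl⟩
  exact ⟨e, he, hesa, hef.symm⟩

theorem star_mem_selfAdjointNormalizer (ha : a ∈ selfAdjointNormalizer E) :
    star a ∈ selfAdjointNormalizer E := by
  ext z
  constructor
  · rintro ⟨e, ⟨he, hesa⟩, rfl⟩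
    obtain ⟨f, hf, hfsa, hef⟩ := exists_mul_eq_mul_of_mem_selfAdjointNormalizer' ha he hesa
    refine ⟨f, ⟨hf, hfsa⟩, ?_⟩
    simpa only [star_mul, hesa, hfsa.star_eq] using (congrArg star hef).symm
  · rintro ⟨f, ⟨hf, hfsa⟩, rfl⟩
    obtain ⟨e, he, hesa, hfe⟩ := exists_mul_eq_mul_of_mem_selfAdjointNormalizer ha hf hfsa
    refine ⟨e, ⟨he, hesa⟩, ?_⟩
    simpa only [star_mul, hesa.star_eq, hfsa] using (congrArg star hfe).symm

end SelfAdjointNormalizer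

section Algebraic

variable {R A : Type*} [CommSemiring R] [Semiring A] [StarRing A] [Module R A]
  {S : NonUnitalStarSubalgebra R A}

theorem mul_mem_selfAdjointNormalizer (hS : ∀ x ∈ S, ∀ y ∈ S, Commute x y) {a G Q : A}
    (ha : a ∈ starNormalizer (S : Set A)) (hc : star a * a ∈ S) (hG : G ∈ S) (hQ : Q ∈ S)
    (hQsa : IsSelfAdjoint Q) (hQG : Q * (star a * a) * G = G) :
    a * G ∈ selfAdjointNormalizer (S : Set A) := by
  have hGQ : G * Q * (star a * a) = G := by
    rw [mul_assoc, (hS _ hG _ (S.mul_mem hQ hc)).eq, hQG]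
  ext z
  constructor
  · rintro ⟨e, ⟨he, hesa⟩, rfl⟩
    refine ⟨a * (e * Q) * star a, ⟨(ha _ (S.mul_mem he hQ)).2, ?_⟩, ?_⟩
    · exact ((IsSelfAdjoint.commute_iff hesa hQsa).mp (hS _ he _ hQ)).conjugate a
    · calc a * (e * Q) * star a * (a * G) = a * (e * (Q * (star a * a) * G)) := by
            simp only [mul_assoc]
        _ = a * G * e := by rw [hQG, (hS _ he _ hG).eq, mul_assoc]
  · rintro ⟨f, ⟨hf, hfsa⟩, rfl⟩
    have hq : star a * f * a ∈ S := (ha _ hf).1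
    refine ⟨Q * (star a * f * a), ⟨S.mul_mem hQ hq, ?_⟩, ?_⟩
    · exact (hQsa.commute_iff (IsSelfAdjoint.conjugate' hfsa a)).mp (hS _ hQ _ hq)
    · have hh : a * (G * Q) * star a ∈ S := (ha _ (S.mul_mem hG hQ)).2
      dsimp only
      calc a * G * (Q * (star a * f * a)) = a * (G * Q) * star a * f * a := by
            simp only [mul_assoc]
        _ = f * (a * (G * Q * (star a * a))) := by
            rw [(hS _ hh _ hf).eq]; simp only [mul_assoc]
        _ = f * (a * G) := by rw [hGQ]

end Algebraic

lemma div_max_abs_sq_mul_mul_one_sub_div_max_abs {ε : ℝ} (hε : 0 < ε) (t : ℝ) :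
    t / max |t| ε ^ 2 * t * (1 - ε / max |t| ε) = 1 - ε / max |t| ε := by
  rcases le_or_gt |t| ε with ht | ht
  · rw [max_eq_right ht, div_self hε.ne', sub_self, mul_zero]
  · have ht0 : t ≠ 0 := abs_pos.mp (hε.trans ht)
    rw [max_eq_left ht.le, sq_abs]
    field_simp

lemma abs_div_max_abs_mul_mul_div_max_abs_le {ε : ℝ} (hε : 0 < ε) (t : ℝ) :
    |ε / max |t| ε * t * (ε / max |t| ε)| ≤ ε := by
  have hm : 0 < max |t| ε := hε.trans_le (le_max_right _ _)
  rw [abs_mul, abs_mul, abs_div, abs_of_pos hε, abs_of_pos hm, div_mul_eq_mul_div,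
    div_mul_div_comm, div_le_iff₀ (by positivity)]
  have h1 : |t| ≤ max |t| ε := le_max_left _ _
  have h2 : ε ≤ max |t| ε := le_max_right _ _
  nlinarith [abs_nonneg t, mul_le_mul h2 h1 (abs_nonneg t) hm.le]

section CStarAlgebra

variable {A : Type*} [CStarAlgebra A]

lemma cfc_mem_of_map_zero (S : NonUnitalStarSubalgebra ℂ A) [IsClosed (S : Set A)] {f : ℝ → ℝ}
    (hf : Continuous f) (hf0 : f 0 = 0) {x : A} (hx : x ∈ S) : cfc f x ∈ S := by
  rw [← cfcₙ_eq_cfc]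
  exact cfcₙ_mem f hx

theorem exists_mem_selfAdjointNormalizer_norm_sub_sq_le (S : NonUnitalStarSubalgebra ℂ A)
    [IsClosed (S : Set A)] (hS : ∀ x ∈ S, ∀ y ∈ S, Commute x y) {a : A}
    (ha : a ∈ starNormalizer (S : Set A)) (hc : star a * a ∈ S) {ε : ℝ} (hε : 0 < ε) :
    ∃ b ∈ selfAdjointNormalizer (S : Set A), ‖a - b‖ ^ 2 ≤ ε := by
  set c := star a * a
  have hm : Continuous fun t : ℝ => max |t| ε := by fun_prop
  have hm0 : ∀ t : ℝ, max |t| ε ≠ 0 := fun t => (hε.trans_le (le_max_right _ _)).ne'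
  have hh : Continuous fun t => ε / max |t| ε := continuous_const.div hm hm0
  have hq : Continuous fun t => t / max |t| ε ^ 2 :=
    continuous_id.div (hm.pow 2) fun t => pow_ne_zero 2 (hm0 t)
  set H := cfc (fun t => ε / max |t| ε) c
  set G := cfc (fun t => 1 - ε / max |t| ε) c
  set Q := cfc (fun t => t / max |t| ε ^ 2) c
  have hGH : G = 1 - H := by
    rw [← cfc_const_one ℝ c]
    exact cfc_sub _ _ c continuousOn_const hh.continuousOn
  have hG : G ∈ S :=
    cfc_mem_of_map_zero S (continuous_const.sub hh) (by simp [hε.le, hε.ne']) hc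
  have hQ : Q ∈ S := cfc_mem_of_map_zero S hq (by simp) hc
  have hQG : Q * c * G = G := by
    calc Q * c * G = cfc (fun t => t / max |t| ε ^ 2 * t * (1 - ε / max |t| ε)) c := by
          rw [cfc_mul .., cfc_mul .., cfc_id' ℝ c]
      _ = G := cfc_congr fun t _ => div_max_abs_sq_mul_mul_one_sub_div_max_abs hε t
  refine ⟨a * G, mul_mem_selfAdjointNormalizer hS ha hc hG hQ (cfc_predicate _ c) hQG, ?_⟩
  have hH : H * c * H = cfc (fun t => ε / max |t| ε * t * (ε / max |t| ε)) c := by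
    rw [cfc_mul .., cfc_mul .., cfc_id' ℝ c]
  have hHsa : IsSelfAdjoint H := cfc_predicate _ c
  calc ‖a - a * G‖ ^ 2 = ‖H * c * H‖ := by
        rw [hGH, mul_sub, mul_one, sub_sub_cancel, sq, ← CStarRing.norm_star_mul_self, star_mul,
          hHsa.star_eq]
        simp only [c, mul_assoc]
    _ ≤ ε := by
        rw [hH]
        exact norm_cfc_le hε.le fun t _ => abs_div_max_abs_mul_mul_div_max_abs_le hε t

theorem mem_closure_selfAdjointNormalizer (S : NonUnitalStarSubalgebra ℂ A)
    [IsClosed (S : Set A)] (hS : ∀ x ∈ S, ∀ y ∈ S, Commute x y) {a : A}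
    (ha : a ∈ starNormalizer (S : Set A)) (hc : star a * a ∈ S) :
    a ∈ closure (selfAdjointNormalizer (S : Set A)) := by
  refine Metric.mem_closure_iff.mpr fun δ hδ => ?_
  obtain ⟨b, hb, hab⟩ :=
    exists_mem_selfAdjointNormalizer_norm_sub_sq_le S hS ha hc (half_pos (pow_pos hδ 2))
  refine ⟨b, hb, ?_⟩
  rw [dist_eq_norm]
  exact (pow_lt_pow_iff_left₀ (norm_nonneg _) hδ.le two_ne_zero).mp (by linarith [pow_pos hδ 2])

end CStarAlgebra

section Complex

open Complex ComplexStarModule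

variable {A : Type*} [Ring A] [StarRing A] [Algebra ℂ A] [StarModule ℂ A]
  {S : NonUnitalStarSubalgebra ℂ A} {a : A}

theorem NonUnitalStarSubalgebra.realPart_mem {x : A} (hx : x ∈ S) : (ℜ x : A) ∈ S := by
  rw [realPart_apply_coe, ← Complex.coe_smul]
  exact SMulMemClass.smul_mem _ (add_mem hx (star_mem hx))

theorem NonUnitalStarSubalgebra.imaginaryPart_mem {x : A} (hx : x ∈ S) : (ℑ x : A) ∈ S := by
  rw [imaginaryPart_apply_coe, ← Complex.coe_smul]
  exact SMulMemClass.smul_mem _ (SMulMemClass.smul_mem _ (sub_mem hx (star_mem hx)))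

theorem commute_star_mul_self_of_mem_selfAdjointNormalizer
    (ha : a ∈ selfAdjointNormalizer (S : Set A)) {x : A} (hx : x ∈ S) :
    Commute (star a * a) x := by
  have hsa : ∀ w ∈ S, IsSelfAdjoint w → Commute (star a * a) w := by
    intro w hw hwsa
    obtain ⟨f, -, hfsa, hwf⟩ := exists_mul_eq_mul_of_mem_selfAdjointNormalizer ha hw hwsa
    have hstar : w * star a = star a * f := by
      simpa only [star_mul, hwsa.star_eq, hfsa.star_eq] using congrArg star hwf
    calc star a * a * w = star a * f * a := by rw [mul_assoc, hwf, mul_assoc]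
      _ = w * (star a * a) := by rw [← hstar, mul_assoc]
  rw [← realPart_add_I_smul_imaginaryPart x]
  exact (hsa _ (S.realPart_mem hx) (ℜ x).2).add_right
    ((hsa _ (S.imaginaryPart_mem hx) (ℑ x).2).smul_right I)

theorem star_mul_mul_mem_of_mem_selfAdjointNormalizer
    (ha : a ∈ selfAdjointNormalizer (S : Set A)) (hc : star a * a ∈ S) {x : A} (hx : x ∈ S) :
    star a * x * a ∈ S := by
  have hsa : ∀ w ∈ S, IsSelfAdjoint w → star a * w * a ∈ S := by
    intro w hw hwsa
    obtain ⟨e, he, -, hwe⟩ := exists_mul_eq_mul_of_mem_selfAdjointNormalizer' ha hw hwsa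
    rw [mul_assoc, hwe, ← mul_assoc]
    exact S.mul_mem hc he
  rw [← realPart_add_I_smul_imaginaryPart x, mul_add, add_mul, mul_smul_comm, smul_mul_assoc]
  exact add_mem (hsa _ (S.realPart_mem hx) (ℜ x).2)
    (SMulMemClass.smul_mem I (hsa _ (S.imaginaryPart_mem hx) (ℑ x).2))

theorem selfAdjointNormalizer_subset_starNormalizer
    (hmax : ∀ x : A, (∀ e ∈ S, Commute x e) → x ∈ S) :
    selfAdjointNormalizer (S : Set A) ⊆ starNormalizer (S : Set A) := by
  have key : ∀ a ∈ selfAdjointNormalizer (S : Set A), ∀ e ∈ S, star a * e * a ∈ S :=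
    fun a ha e he => star_mul_mul_mem_of_mem_selfAdjointNormalizer ha
      (hmax _ fun x hx => commute_star_mul_self_of_mem_selfAdjointNormalizer ha hx) he
  intro a ha e he
  exact ⟨key a ha e he, by
    simpa only [star_star, SetLike.mem_coe] using key _ (star_mem_selfAdjointNormalizer ha) e he⟩

end Complex

/-- Theorem 2.16: if `A` is a C*-algebra and `E` a commutative C*-subalgebra
containing an approximate unit for `A` (encoded as a filter `l`, corresponding
to a net `(e_λ) ⊆ E` with `e_λ a → a` for all `a`), then the *-normalisers of
`E` are contained in the closure of the normalisers of `E_sa`; if `E` is also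
maximal commutative then they coincide. -/
theorem stmt0 {A : Type*} [NormedRing A] [StarRing A] [CStarRing A]
    [NormedAlgebra ℂ A] [StarModule ℂ A] [CompleteSpace A]
    (E : Set A) (hclosed : IsClosed E)
    (hadd : ∀ x ∈ E, ∀ y ∈ E, x + y ∈ E)
    (hmul : ∀ x ∈ E, ∀ y ∈ E, x * y ∈ E)
    (hsmul : ∀ (c : ℂ), ∀ x ∈ E, c • x ∈ E)
    (hstar : ∀ x ∈ E, star x ∈ E)
    (hcomm : ∀ x ∈ E, ∀ y ∈ E, x * y = y * x)
    (happrox : ∃ l : Filter A, l.NeBot ∧ (∀ᶠ e in l, e ∈ E) ∧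
      ∀ a : A, Tendsto (fun e => e * a) l (𝓝 a)) :
    {a : A | ∀ e ∈ E, star a * e * a ∈ E ∧ a * e * star a ∈ E} ⊆
      closure {a : A | (fun x => a * x) '' {e ∈ E | star e = e} =
        (fun x => x * a) '' {e ∈ E | star e = e}} ∧
    ((∀ x : A, (∀ e ∈ E, x * e = e * x) → x ∈ E) →
      {a : A | ∀ e ∈ E, star a * e * a ∈ E ∧ a * e * star a ∈ E} =
        closure {a : A | (fun x => a * x) '' {e ∈ E | star e = e} =
          (fun x => x * a) '' {e ∈ E | star e = e}}) := by
  let _ : CStarAlgebra A :=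
    { ‹NormedRing A›, ‹StarRing A›, ‹CStarRing A›, ‹NormedAlgebra ℂ A›,
      ‹StarModule ℂ A›, ‹CompleteSpace A› with }
  obtain ⟨l, hl, hlE, hlim⟩ := happrox
  obtain ⟨e₀, he₀⟩ := hlE.exists
  let S : NonUnitalStarSubalgebra ℂ A :=
    { carrier := E
      add_mem' := fun hx hy => hadd _ hx _ hy
      zero_mem' := by simpa using hsmul 0 e₀ he₀
      mul_mem' := fun hx hy => hmul _ hx _ hy
      smul_mem' := hsmul
      star_mem' := fun hx => hstar _ hx }
  have : IsClosed (S : Set A) := hclosed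
  have hsub : starNormalizer E ⊆ closure (selfAdjointNormalizer E) := fun a ha =>
    mem_closure_selfAdjointNormalizer S hcomm ha
      (star_mul_self_mem_of_tendsto_mul hclosed hlE (hlim a) ha)
  exact ⟨hsub, fun hmax => hsub.antisymm (closure_minimal
    (selfAdjointNormalizer_subset_starNormalizer (S := S) hmax) (isClosed_starNormalizer hclosed))⟩
end

section
/- Let (S, E) be a Weyl *-semigroup. Then *-domination preserves products: for all a, b, c, d ∈ S, if a ≲ b and c ≲ d then ac ≲ bd. -/
open scoped Pointwise

variable {S : Type*} [Semigroup S] [StarMul S]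

/-- `(S, E)` is a Weyl *-semigroup: `E` is a *-subsemigroup, `E` is *-normal,
and the *-squares lie in `E` and commute with every element of `E`. -/
def WeylPair (E : Set S) : Prop :=
  (∀ a ∈ E, ∀ b ∈ E, a * b ∈ E) ∧ star '' E = E ∧
  (∀ (a : S), ∀ e ∈ E, star a * e * a ∈ E) ∧
  (∀ a : S, star a * a ∈ E) ∧
  (∀ (a : S), ∀ e ∈ E, star a * a * e = e * (star a * a))

/-- *-domination: `a ≲ b` iff `ab* ∈ E` and `a = ab*b`. -/
def Sdom (E : Set S) (a b : S) : Prop := a * star b ∈ E ∧ a = a * star b * b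

theorem stmt2 (E : Set S) (hE : WeylPair E) :
    ∀ a b c d : S, Sdom E a b → Sdom E c d → Sdom E (a * c) (b * d) := by
  obtain ⟨hmul, -, hnorm, hsq, hcomm⟩ := hE
  rintro a b c d ⟨hab, hab'⟩ ⟨hcd, hcd'⟩
  have hbeb : b * (c * star d) * star b ∈ E := by
    have := hnorm (star b) _ hcd
    simpa using this
  constructor
  · have h : a * c * star (b * d) = (a * star b) * (b * (c * star d) * star b) := by
      nth_rewrite 1 [hab']
      simp [star_mul, mul_assoc]
    rw [h]
    exact hmul _ hab _ hbeb
  · have key : (c * star d) * (star b * b) = (star b * b) * (c * star d) :=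
      (hcomm b _ hcd).symm
    calc a * c = (a * star b * b) * (c * star d * d) := by rw [← hab', ← hcd']
    _ = a * ((star b * b) * (c * star d)) * d := by simp [mul_assoc]
    _ = a * ((c * star d) * (star b * b)) * d := by rw [← key]
    _ = a * c * star (b * d) * (b * d) := by simp [star_mul, mul_assoc]
end

section
/- Let (S, E) be a Weyl *-semigroup, let C ⊆ S be an atlas, and let a ∈ S be such that there exists b ∈ S with b ≺ aa* (i.e. b = b·aa*) and b ∈ (C*C)^≲. Then Ca and Caa* are atlases and C^≲ = (Caa*)^≲. -/
open scoped Pointwise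

variable {S : Type*} [Semigroup S] [StarMul S]

/-- Domination: `a ≺ b` iff `a = ab`. -/
def Dom (a b : S) : Prop := a = a * b

/-- `T^≲ = {x ∈ S : ∃ t ∈ T, t ≲ x}`. -/
def upcl (E : Set S) (T : Set S) : Set S := {x | ∃ t ∈ T, Sdom E t x}

/-- `C` is an atlas if `CC*C ∪ C ⊆ C^≲`. -/
def IsAtlas (E : Set S) (C : Set S) : Prop := C * star C * C ∪ C ⊆ upcl E C

private lemma wsg_starE {E : Set S} (hs : star '' E = E) {e : S} (he : e ∈ E) :
    star e ∈ E := by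
  rw [← hs] at he
  obtain ⟨f, hf, rfl⟩ := he
  rwa [star_star]

private lemma wsg_absorb0 {u x : S} (a2 : u = u * star x * x) : u * (star x * x) = u := by
  conv_rhs => rw [a2]
  rw [mul_assoc]

private lemma wsg_absorb {u x : S} (a2 : u = u * star x * x) (t : S) :
    u * (star x * (x * t)) = u * t := by
  conv_rhs => rw [a2]
  simp only [mul_assoc]

private lemma wsg_star_absorb {v y : S} (b2 : v = v * star y * y) (t : S) :
    star y * (y * (star v * t)) = star v * t := by
  conv_rhs => rw [b2]
  simp only [star_mul, star_star, mul_assoc]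

private lemma wsg_swapE {E : Set S}
    (hcm : ∀ (a : S), ∀ e ∈ E, star a * a * e = e * (star a * a))
    {e : S} (he : e ∈ E) (x t : S) :
    e * (star x * (x * t)) = star x * (x * (e * t)) := by
  have h := hcm x e he
  calc e * (star x * (x * t)) = (e * (star x * x)) * t := by simp only [mul_assoc]
    _ = ((star x * x) * e) * t := by rw [← h]
    _ = star x * (x * (e * t)) := by simp only [mul_assoc]

private lemma wsg_swapSq {E : Set S}
    (hcm : ∀ (a : S), ∀ e ∈ E, star a * a * e = e * (star a * a))
    {e : S} (he : e ∈ E) (y t : S) :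
    e * (y * (star y * t)) = y * (star y * (e * t)) := by
  have h := hcm (star y) e he
  rw [star_star] at h
  calc e * (y * (star y * t)) = (e * (y * star y)) * t := by simp only [mul_assoc]
    _ = ((y * star y) * e) * t := by rw [← h]
    _ = y * (star y * (e * t)) := by simp only [mul_assoc]

private lemma wsg_sdom_trans {E : Set S}
    (hm : ∀ a ∈ E, ∀ b ∈ E, a * b ∈ E)
    {u x y : S} (h1 : Sdom E u x) (h2 : Sdom E x y) : Sdom E u y := by
  obtain ⟨a1, a2⟩ := h1
  obtain ⟨b1, b2⟩ := h2
  have e1 : u * star y = (u * star x) * (x * star y) := by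
    conv_lhs => rw [a2]
    simp only [mul_assoc]
  constructor
  · rw [e1]; exact hm _ a1 _ b1
  · have e2 : u * star y * y = u := by
      rw [e1, mul_assoc (u * star x), ← b2, ← a2]
    exact e2.symm

private lemma wsg_sdom_mulE {E : Set S}
    (hm : ∀ a ∈ E, ∀ b ∈ E, a * b ∈ E)
    (hn : ∀ (a : S), ∀ e ∈ E, star a * e * a ∈ E)
    (hcm : ∀ (a : S), ∀ e ∈ E, star a * a * e = e * (star a * a))
    {u x e : S} (h : Sdom E u x) (he : e ∈ E) : Sdom E (u * e) x := by
  obtain ⟨a1, a2⟩ := h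
  constructor
  · have e1 : u * e * star x = (u * star x) * (x * e * star x) := by
      conv_lhs => rw [a2]
      simp only [mul_assoc]
    rw [e1]
    refine hm _ a1 _ ?_
    have h2 := hn (star x) e he
    rwa [star_star] at h2
  · have e2 : u * e * star x * x = u * e := by
      calc u * e * star x * x = u * (e * (star x * x)) := by simp only [mul_assoc]
        _ = u * ((star x * x) * e) := by rw [← hcm x e he]
        _ = u * (star x * x) * e := by rw [← mul_assoc]
        _ = u * e := by rw [wsg_absorb0 a2]
    exact e2.symm

private lemma wsg_sdom_mul3 {E : Set S}
    (hm : ∀ a ∈ E, ∀ b ∈ E, a * b ∈ E) (hs : star '' E = E)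
    (hn : ∀ (a : S), ∀ e ∈ E, star a * e * a ∈ E)
    (hcm : ∀ (a : S), ∀ e ∈ E, star a * a * e = e * (star a * a))
    {u x v y w z : S} (hu : Sdom E u x) (hv : Sdom E v y) (hw : Sdom E w z) :
    Sdom E (u * star v * w) (x * star y * z) := by
  obtain ⟨a1, a2⟩ := hu
  obtain ⟨b1, b2⟩ := hv
  obtain ⟨c1, c2⟩ := hw
  have hB : y * star v ∈ E := by
    have hb' : star (v * star y) ∈ E := wsg_starE hs b1
    rwa [star_mul, star_star] at hb'
  have hBC : (y * star v) * (w * star z) ∈ E := hm _ hB _ c1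
  have hM : star y * ((y * star v) * (w * star z)) * y ∈ E := hn y _ hBC
  constructor
  · have e1 : (u * star x) * (x * (star y * ((y * star v) * (w * star z)) * y) * star x)
        = u * star v * w * star (x * star y * z) := by
      calc (u * star x) * (x * (star y * ((y * star v) * (w * star z)) * y) * star x)
          = u * (star x * (x * (star y * (y * (star v * (w * (star z * (y * star x)))))))) := by
            simp only [mul_assoc]
        _ = u * (star y * (y * (star v * (w * (star z * (y * star x)))))) := wsg_absorb a2 _
        _ = u * (star v * (w * (star z * (y * star x)))) := by rw [wsg_star_absorb b2]
        _ = u * star v * w * star (x * star y * z) := by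
            simp only [star_mul, star_star, mul_assoc]
    rw [← e1]
    refine hm _ a1 _ ?_
    have h2 := hn (star x) _ hM
    rwa [star_star] at h2
  · have e2 : u * star v * w * star (x * star y * z) * (x * star y * z) = u * star v * w := by
      calc u * star v * w * star (x * star y * z) * (x * star y * z)
          = u * (star v * (w * (star z * (y * (star x * (x * (star y * z))))))) := by
            simp only [star_mul, star_star, mul_assoc]
        _ = u * (star y * (y * (star v * (w * (star z * (y * (star x * (x * (star y * z))))))))) := by
            conv_lhs =>
              rw [← wsg_star_absorb b2 (w * (star z * (y * (star x * (x * (star y * z))))))]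
        _ = u * ((star y * ((y * star v) * (w * star z)) * y) * (star x * (x * (star y * z)))) := by
            simp only [mul_assoc]
        _ = u * (star x * (x * ((star y * ((y * star v) * (w * star z)) * y) * (star y * z)))) := by
            rw [wsg_swapE hcm hM x (star y * z)]
        _ = u * ((star y * ((y * star v) * (w * star z)) * y) * (star y * z)) := wsg_absorb a2 _
        _ = u * (star y * ((y * star v) * ((w * star z) * (y * (star y * z))))) := by
            simp only [mul_assoc]
        _ = u * (star y * ((y * star v) * (y * (star y * ((w * star z) * z))))) := by
            rw [wsg_swapSq hcm c1 y z]
        _ = u * (star y * ((y * star v) * (y * (star y * w)))) := by rw [← c2]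
        _ = u * (star y * (y * (star y * ((y * star v) * w)))) := by
            rw [wsg_swapSq hcm hB y w]
        _ = u * (star y * (y * (star y * (y * (star v * w))))) := by simp only [mul_assoc]
        _ = u * (star y * (y * (star v * w))) := by
            conv_lhs => rw [wsg_star_absorb b2 w]
        _ = u * (star v * w) := by rw [wsg_star_absorb b2 w]
        _ = u * star v * w := by rw [← mul_assoc]
    exact e2.symm

private lemma wsg_sdom_mul_right {E : Set S} {u x s : S} (h : Sdom E u x)
    (hp : u * (s * star s) = u) : Sdom E (u * s) (x * s) := by
  obtain ⟨a1, a2⟩ := h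
  constructor
  · have e1 : u * s * star (x * s) = u * star x := by
      rw [star_mul]
      calc u * s * (star s * star x) = u * (s * star s) * star x := by simp only [mul_assoc]
        _ = u * star x := by rw [hp]
    rw [e1]; exact a1
  · have e2 : u * s * star (x * s) * (x * s) = u * s := by
      rw [star_mul]
      calc u * s * (star s * star x) * (x * s)
          = u * (s * star s) * (star x * (x * s)) := by simp only [mul_assoc]
        _ = u * (star x * (x * s)) := by rw [hp]
        _ = u * star x * x * s := by simp only [mul_assoc]
        _ = u * s := by rw [← a2]
    exact e2.symm

private lemma wsg_sdom_p {E : Set S} {u x s : S} (h : Sdom E u x)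
    (hp : u * (s * star s) = u) : Sdom E u (x * (s * star s)) := by
  obtain ⟨a1, a2⟩ := h
  have hstar : star (x * (s * star s)) = s * star s * star x := by
    simp only [star_mul, star_star, mul_assoc]
  constructor
  · rw [hstar, ← mul_assoc, hp]
    exact a1
  · have e2 : u * star (x * (s * star s)) * (x * (s * star s)) = u := by
      rw [hstar]
      calc u * (s * star s * star x) * (x * (s * star s))
          = u * (s * star s) * (star x * (x * (s * star s))) := by simp only [mul_assoc]
        _ = u * (star x * (x * (s * star s))) := by rw [hp]
        _ = u * star x * x * (s * star s) := by simp only [mul_assoc]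
        _ = u * (s * star s) := by rw [← a2]
        _ = u := hp
    exact e2.symm

theorem stmt3 (E : Set S) (hE : WeylPair E) (C : Set S) (hC : IsAtlas E C) (a : S)
    (h : ∃ b : S, Dom b (a * star a) ∧ b ∈ upcl E (star C * C)) :
    IsAtlas E (C * {a}) ∧ IsAtlas E (C * {a * star a}) ∧
      upcl E C = upcl E (C * {a * star a}) := by
  obtain ⟨hm, hs, hn, hsq, hcm⟩ := hE
  obtain ⟨b, hb, hbu⟩ := h
  obtain ⟨t0, ht0mem, ht0b⟩ := hbu
  obtain ⟨u0, hu0m, d0, hd0, rfl⟩ := Set.mem_mul.mp ht0mem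
  have hu0 : star u0 ∈ C := hu0m
  have hb' : b = b * (a * star a) := hb
  obtain ⟨hb1, hb2⟩ := ht0b
  have ht0p : u0 * d0 * (a * star a) = u0 * d0 := by
    conv_lhs => rw [hb2]
    rw [mul_assoc (u0 * d0 * star b), ← hb', ← hb2]
  have htp : star (u0 * d0) * (u0 * d0) * (a * star a) = star (u0 * d0) * (u0 * d0) := by
    rw [mul_assoc, ht0p]
  have hCD : ∀ {c : S}, c ∈ C → c ∈ upcl E C := fun hc' => hC (Set.mem_union_right _ hc')
  have hCCC : ∀ {c1 c2 c3 : S}, c1 ∈ C → c2 ∈ C → c3 ∈ C →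
      c1 * star c2 * c3 ∈ upcl E C := by
    intro c1 c2 c3 h1 h2 h3
    refine hC (Set.mem_union_left _ ?_)
    refine Set.mul_mem_mul (Set.mul_mem_mul h1 ?_) h3
    refine Set.mem_star.mpr ?_
    rwa [star_star]
  have cosetD : ∀ x y z : S, x ∈ upcl E C → y ∈ upcl E C → z ∈ upcl E C →
      x * star y * z ∈ upcl E C := by
    rintro x y z ⟨cu, hcu, hux⟩ ⟨cv, hcv, hvy⟩ ⟨cw, hcw, hwz⟩
    obtain ⟨c', hc', hrel⟩ := hCCC hcu hcv hcw
    exact ⟨c', hc', wsg_sdom_trans hm hrel (wsg_sdom_mul3 hm hs hn hcm hux hvy hwz)⟩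
  have KEY : ∀ c ∈ C, ∃ c' ∈ C, Sdom E c' c ∧ c' * (a * star a) = c' := by
    intro c hcmem
    obtain ⟨c1, hc1, hc1c⟩ := hCD hcmem
    have hXD : c1 * star d0 * star u0 ∈ upcl E C := hCCC hc1 hd0 hu0
    have hprod := cosetD _ _ _ hXD (hCD hu0) (hCD hd0)
    have heq : c1 * star d0 * star u0 * star (star u0) * d0
        = c1 * (star (u0 * d0) * (u0 * d0)) := by
      simp only [star_mul, star_star, mul_assoc]
    rw [heq] at hprod
    obtain ⟨c', hc'C, hc'rel⟩ := hprod
    have htE : star (u0 * d0) * (u0 * d0) ∈ E := hsq (u0 * d0)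
    refine ⟨c', hc'C, wsg_sdom_trans hm hc'rel (wsg_sdom_mulE hm hn hcm hc1c htE), ?_⟩
    obtain ⟨d1, d2⟩ := hc'rel
    have hX'p : c1 * (star (u0 * d0) * (u0 * d0)) * (a * star a)
        = c1 * (star (u0 * d0) * (u0 * d0)) := by
      rw [mul_assoc, htp]
    conv_lhs => rw [d2]
    rw [mul_assoc (c' * star (c1 * (star (u0 * d0) * (u0 * d0)))), hX'p, ← d2]
  refine ⟨?_, ?_, ?_⟩
  · rintro x (hx | hx)
    · obtain ⟨q, hq', r, hr, rfl⟩ := Set.mem_mul.mp hx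
      obtain ⟨q1, hq1, q2, hq2, rfl⟩ := Set.mem_mul.mp hq'
      obtain ⟨c1, hc1, z1, hz1, rfl⟩ := Set.mem_mul.mp hq1
      rw [Set.mem_singleton_iff] at hz1; subst z1
      obtain ⟨c3, hc3, z3, hz3, rfl⟩ := Set.mem_mul.mp hr
      rw [Set.mem_singleton_iff] at hz3; subst z3
      have hq2' : star q2 ∈ C * {a} := hq2
      obtain ⟨c2, hc2, z2, hz2, hq2e⟩ := Set.mem_mul.mp hq2'
      rw [Set.mem_singleton_iff] at hz2; subst z2
      have hq2eq : q2 = star (c2 * a) := by rw [hq2e, star_star]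
      subst hq2eq
      obtain ⟨c1', h1C, h1sd, h1p⟩ := KEY c1 hc1
      have hXD : c1 * (a * star a) ∈ upcl E C := ⟨c1', h1C, wsg_sdom_p h1sd h1p⟩
      obtain ⟨c4, h4C, h4⟩ := cosetD _ _ _ hXD (hCD hc2) (hCD hc3)
      obtain ⟨c5, h5C, h5sd, h5p⟩ := KEY c4 h4C
      have h5Q : Sdom E c5 (c1 * (a * star a) * star c2 * c3) := wsg_sdom_trans hm h5sd h4
      have hfin : Sdom E (c5 * a) (c1 * (a * star a) * star c2 * c3 * a) :=
        wsg_sdom_mul_right h5Q h5p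
      have heqx : c1 * (a * star a) * star c2 * c3 * a
          = c1 * a * star (c2 * a) * (c3 * a) := by
        simp only [star_mul, star_star, mul_assoc]
      rw [heqx] at hfin
      exact ⟨c5 * a, Set.mul_mem_mul h5C rfl, hfin⟩
    · obtain ⟨c, hc0, z, hz, rfl⟩ := Set.mem_mul.mp hx
      rw [Set.mem_singleton_iff] at hz; subst z
      obtain ⟨c', h'C, h'sd, h'p⟩ := KEY c hc0
      exact ⟨c' * a, Set.mul_mem_mul h'C rfl, wsg_sdom_mul_right h'sd h'p⟩
  · rintro x (hx | hx)
    · obtain ⟨q, hq', r, hr, rfl⟩ := Set.mem_mul.mp hx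
      obtain ⟨q1, hq1, q2, hq2, rfl⟩ := Set.mem_mul.mp hq'
      obtain ⟨c1, hc1, z1, hz1, rfl⟩ := Set.mem_mul.mp hq1
      rw [Set.mem_singleton_iff] at hz1; subst z1
      obtain ⟨c3, hc3, z3, hz3, rfl⟩ := Set.mem_mul.mp hr
      rw [Set.mem_singleton_iff] at hz3; subst z3
      have hq2' : star q2 ∈ C * {a * star a} := hq2
      obtain ⟨c2, hc2, z2, hz2, hq2e⟩ := Set.mem_mul.mp hq2'
      rw [Set.mem_singleton_iff] at hz2; subst z2
      have hq2eq : q2 = star (c2 * (a * star a)) := by rw [hq2e, star_star]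
      subst hq2eq
      obtain ⟨c1', h1C, h1sd, h1p⟩ := KEY c1 hc1
      have hXD : c1 * (a * star a) * (a * star a) ∈ upcl E C :=
        ⟨c1', h1C, wsg_sdom_p (wsg_sdom_p h1sd h1p) h1p⟩
      obtain ⟨c3', h3C, h3sd, h3p⟩ := KEY c3 hc3
      have hZD : c3 * (a * star a) ∈ upcl E C := ⟨c3', h3C, wsg_sdom_p h3sd h3p⟩
      obtain ⟨c4, h4C, h4⟩ := cosetD _ _ _ hXD (hCD hc2) hZD
      obtain ⟨c5, h5C, h5sd, h5p⟩ := KEY c4 h4C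
      have h5Q : Sdom E c5 (c1 * (a * star a) * (a * star a) * star c2 * (c3 * (a * star a))) :=
        wsg_sdom_trans hm h5sd h4
      have heqx : c1 * (a * star a) * (a * star a) * star c2 * (c3 * (a * star a))
          = c1 * (a * star a) * star (c2 * (a * star a)) * (c3 * (a * star a)) := by
        simp only [star_mul, star_star, mul_assoc]
      rw [heqx] at h5Q
      refine ⟨c5 * (a * star a), Set.mul_mem_mul h5C rfl, ?_⟩
      rw [h5p]; exact h5Q
    · obtain ⟨c, hc0, z, hz, rfl⟩ := Set.mem_mul.mp hx
      rw [Set.mem_singleton_iff] at hz; subst z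
      obtain ⟨c', h'C, h'sd, h'p⟩ := KEY c hc0
      refine ⟨c' * (a * star a), Set.mul_mem_mul h'C rfl, ?_⟩
      rw [h'p]; exact wsg_sdom_p h'sd h'p
  · ext x
    constructor
    · rintro ⟨c, hcC, hcx⟩
      obtain ⟨c', h'C, h'sd, h'p⟩ := KEY c hcC
      refine ⟨c' * (a * star a), Set.mul_mem_mul h'C rfl, ?_⟩
      rw [h'p]; exact wsg_sdom_trans hm h'sd hcx
    · rintro ⟨t, ht, htx⟩
      obtain ⟨c, hcC, z, hz, rfl⟩ := Set.mem_mul.mp ht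
      rw [Set.mem_singleton_iff] at hz; subst z
      obtain ⟨c', h'C, h'sd, h'p⟩ := KEY c hcC
      exact ⟨c', h'C, wsg_sdom_trans hm (wsg_sdom_p h'sd h'p) htx⟩
end

section
/- Let (S, E) be a Weyl *-semigroup and let B, C be nonempty cosets with (B*B)^≲ = (CC*)^≲. Then: (i) for every c ∈ C, (BC)^≲ is a nonempty coset and (BC)^≲ = (Bc)^≲; (ii) (((BC)^≲)((BC)^≲)*)^≲ = (BB*)^≲ and (((BC)^≲)*((BC)^≲))^≲ = (C*C)^≲; (iii) ((CC*)^≲ · C)^≲ = C; and (iv) if A is a nonempty coset with (A*A)^≲ = (BB*)^≲ then ((AB)^≲ · C)^≲ = (ABC)^≲ = (A · (BC)^≲)^≲. (Hence the nonempty cosets form a groupoid under the inverse C ↦ C* and the product (B, C) ↦ (BC)^≲, defined whenever (B*B)^≲ = (CC*)^≲.) -/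
open scoped Pointwise

variable {S : Type*} [Semigroup S] [StarMul S]

/-- `C` is a coset if `CC*C ⊆ C = C^≲`. -/
def IsCoset (E : Set S) (C : Set S) : Prop := C * star C * C ⊆ C ∧ C = upcl E C

section Aux

variable {E : Set S}

private theorem estar (hE : WeylPair E) {e : S} (he : e ∈ E) : star e ∈ E := by
  have h2 := hE.2.1
  rw [← h2]
  exact ⟨e, he, rfl⟩

private theorem emul (hE : WeylPair E) {a b : S} (ha : a ∈ E) (hb : b ∈ E) : a * b ∈ E :=
  hE.1 a ha b hb

private theorem enorm (hE : WeylPair E) (a : S) {e : S} (he : e ∈ E) : star a * e * a ∈ E :=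
  hE.2.2.1 a e he

private theorem enorm' (hE : WeylPair E) (a : S) {e : S} (he : e ∈ E) : a * e * star a ∈ E := by
  simpa using hE.2.2.1 (star a) e he

private theorem ecomm (hE : WeylPair E) (a : S) {e : S} (he : e ∈ E) :
    star a * a * e = e * (star a * a) := hE.2.2.2.2 a e he

private theorem ecomm' (hE : WeylPair E) (a : S) {e : S} (he : e ∈ E) :
    a * star a * e = e * (a * star a) := by simpa using hE.2.2.2.2 (star a) e he

private theorem sdom_absorb (hE : WeylPair E) {a b : S} (h : Sdom E a b) :
    b * star b * a = a := by
  conv_lhs => rw [h.2]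
  rw [show b * star b * (a * star b * b) = b * star b * (a * star b) * b from by
    simp only [mul_assoc]]
  rw [ecomm' hE b h.1]
  rw [show a * star b * (b * star b) * b = a * star b * b * (star b * b) from by
    simp only [mul_assoc]]
  rw [← h.2, ← mul_assoc, ← h.2]

private theorem sdom_star (hE : WeylPair E) {a b : S} (h : Sdom E a b) :
    Sdom E (star a) (star b) := by
  constructor
  · rw [star_star]
    have hba : b * star a ∈ E := by
      have := estar hE h.1; rwa [star_mul, star_star] at this
    have ha' : star a = star b * (b * star a) := by
      conv_lhs => rw [h.2]
      rw [star_mul, star_mul, star_star]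
    rw [ha']
    exact enorm hE b hba
  · rw [star_star]
    conv_lhs => rw [← sdom_absorb hE h]
    rw [star_mul, star_mul, star_star, ← mul_assoc]

private theorem sdom_trans (hE : WeylPair E) {a b c : S} (h₁ : Sdom E a b) (h₂ : Sdom E b c) :
    Sdom E a c := by
  have key : a * star c = (a * star b) * (b * star c) := by
    conv_lhs => rw [h₁.2]
    simp only [mul_assoc]
  constructor
  · rw [key]; exact emul hE h₁.1 h₂.1
  · have : a * star c * c = a := by
      rw [key]
      rw [show a * star b * (b * star c) * c = a * star b * (b * star c * c) from by
        simp only [mul_assoc]]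
      rw [← h₂.2, ← h₁.2]
    exact this.symm

private theorem sdom_mul (hE : WeylPair E) {a b c d : S} (h₁ : Sdom E a b) (h₂ : Sdom E c d) :
    Sdom E (a * c) (b * d) := by
  constructor
  · have hkey : a * c * star (b * d) = (a * star b) * (b * (c * star d) * star b) := by
      conv_lhs => rw [h₁.2]
      rw [star_mul]
      simp only [mul_assoc]
    rw [hkey]
    exact emul hE h₁.1 (enorm' hE b h₂.1)
  · have h1r0 : a * (star b * b) = a := by rw [← mul_assoc, ← h₁.2]
    have : a * c * star (b * d) * (b * d) = a * c := by
      rw [star_mul]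
      rw [show a * c * (star d * star b) * (b * d)
            = a * ((c * star d) * (star b * b)) * d from by simp only [mul_assoc]]
      rw [← ecomm hE b h₂.1]
      rw [show a * (star b * b * (c * star d)) * d
            = a * (star b * b) * (c * star d * d) from by simp only [mul_assoc]]
      rw [h1r0, ← h₂.2]
    exact this.symm

private theorem sdom_of_eq {a b a' b' : S} (hd : Sdom E a b) (ha : a = a') (hb : b = b') :
    Sdom E a' b' := by
  rw [← ha, ← hb]; exact hd

/-- The key lemma: if `u ≲ p q*`, `q ≲ c` and `p ≲ d`, then `u c ≲ d`. -/
private theorem m9 (hE : WeylPair E) {u p q c d : S} (hu : Sdom E u (p * star q))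
    (hq : Sdom E q c) (hp : Sdom E p d) : Sdom E (u * c) d := by
  have e₂ : u * (q * star p) ∈ E := by
    have := hu.1; rwa [star_mul, star_star] at this
  have e₁ : star q * c ∈ E := by
    have := (sdom_star hE hq).1; rwa [star_star] at this
  have hu2 : u = u * (q * star p) * (p * star q) := by
    have := hu.2; rwa [star_mul, star_star] at this
  have key : u * c = u * (q * star p) * (p * (star q * c)) := by
    conv_lhs => rw [hu2]
    simp only [mul_assoc]
  constructor
  · have expand : u * c * star d
        = (u * (q * star p)) * ((p * star d) * (d * (star q * c) * star d)) := by
      conv_lhs => rw [key]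
      conv_lhs => rw [show p * (star q * c) = p * star d * d * (star q * c) from by
        rw [← hp.2]]
      simp only [mul_assoc]
    rw [expand]
    exact emul hE e₂ (emul hE hp.1 (enorm' hE d e₁))
  · have calc1 : u * c * star d * d = u * c := by
      conv_lhs => rw [key]
      rw [show u * (q * star p) * (p * (star q * c)) * star d * d
            = u * (q * star p) * (p * ((star q * c) * (star d * d))) from by
        simp only [mul_assoc]]
      rw [← ecomm hE d e₁]
      rw [show u * (q * star p) * (p * (star d * d * (star q * c)))
            = u * (q * star p) * (p * star d * d * (star q * c)) from by
        simp only [mul_assoc]]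
      rw [← hp.2]
      exact key.symm
    exact calc1.symm

private theorem upcl_upcl (hE : WeylPair E) {T : Set S} :
    upcl E (upcl E T) ⊆ upcl E T := by
  rintro x ⟨t, ⟨s, hs, h1⟩, h2⟩
  exact ⟨s, hs, sdom_trans hE h1 h2⟩

end Aux

theorem stmt4 (E : Set S) (hE : WeylPair E) (B C : Set S)
    (hB : IsCoset E B) (hC : IsCoset E C) (hBne : B.Nonempty) (hCne : C.Nonempty)
    (h : upcl E (star B * B) = upcl E (C * star C)) :
    (∀ c ∈ C, IsCoset E (upcl E (B * C)) ∧ (upcl E (B * C)).Nonempty ∧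
        upcl E (B * C) = upcl E (B * {c})) ∧
    upcl E (upcl E (B * C) * star (upcl E (B * C))) = upcl E (B * star B) ∧
    upcl E (star (upcl E (B * C)) * upcl E (B * C)) = upcl E (star C * C) ∧
    upcl E (upcl E (C * star C) * C) = C ∧
    (∀ A' : Set S, IsCoset E A' → A'.Nonempty →
      upcl E (star A' * A') = upcl E (B * star B) →
        upcl E (upcl E (A' * B) * C) = upcl E (A' * B * C) ∧
        upcl E (A' * B * C) = upcl E (A' * upcl E (B * C))) := by
  -- lowering within cosets
  have lowB : ∀ {b : S}, b ∈ B → ∃ b' ∈ B, Sdom E b' b := by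
    intro b hb; rw [hB.2] at hb; exact hb
  have lowC : ∀ {c : S}, c ∈ C → ∃ c' ∈ C, Sdom E c' c := by
    intro c hc; rw [hC.2] at hc; exact hc
  -- members of B*C are in the up-closure
  have memBC : ∀ {b c : S}, b ∈ B → c ∈ C → b * c ∈ upcl E (B * C) := by
    intro b c hb hc
    obtain ⟨b', hb', hsb⟩ := lowB hb
    obtain ⟨c', hc', hsc⟩ := lowC hc
    exact ⟨b' * c', Set.mul_mem_mul hb' hc', sdom_mul hE hsb hsc⟩
  -- transfer lemmas via `h`
  have hBBE : ∀ {b₁ b₂ : S}, b₁ ∈ B → b₂ ∈ B →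
      ∃ d₁ ∈ C, ∃ d₂ ∈ C, Sdom E (d₁ * star d₂) (star b₁ * b₂) := by
    intro b₁ b₂ h1 h2
    obtain ⟨b₁', h1', s1⟩ := lowB h1
    obtain ⟨b₂', h2', s2⟩ := lowB h2
    have hmem : star b₁ * b₂ ∈ upcl E (star B * B) :=
      ⟨star b₁' * b₂', Set.mul_mem_mul (Set.star_mem_star.mpr h1') h2',
        sdom_mul hE (sdom_star hE s1) s2⟩
    rw [h] at hmem
    obtain ⟨t, htm, hts⟩ := hmem
    rw [Set.mem_mul] at htm
    obtain ⟨d₁, hd₁, w, hw, rfl⟩ := htm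
    refine ⟨d₁, hd₁, star w, Set.mem_star.mp hw, ?_⟩
    rw [star_star]; exact hts
  have hCCE : ∀ {c₁ c₂ : S}, c₁ ∈ C → c₂ ∈ C →
      ∃ b₁ ∈ B, ∃ b₂ ∈ B, Sdom E (star b₁ * b₂) (c₁ * star c₂) := by
    intro c₁ c₂ h1 h2
    obtain ⟨c₁', h1', s1⟩ := lowC h1
    obtain ⟨c₂', h2', s2⟩ := lowC h2
    have hmem : c₁ * star c₂ ∈ upcl E (C * star C) :=
      ⟨c₁' * star c₂', Set.mul_mem_mul h1' (Set.star_mem_star.mpr h2'),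
        sdom_mul hE s1 (sdom_star hE s2)⟩
    rw [← h] at hmem
    obtain ⟨t, htm, hts⟩ := hmem
    rw [Set.mem_mul] at htm
    obtain ⟨w, hw, b₂, hb₂, rfl⟩ := htm
    refine ⟨star w, Set.mem_star.mp hw, b₂, hb₂, ?_⟩
    rw [star_star]; exact hts
  -- (BC)^≲ is a coset
  have Dc2 : upcl E (B * C) = upcl E (upcl E (B * C)) := by
    apply Set.Subset.antisymm
    · rintro x ⟨t, htm, hts⟩
      rw [Set.mem_mul] at htm
      obtain ⟨b, hb, c, hc, rfl⟩ := htm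
      exact ⟨b * c, memBC hb hc, hts⟩
    · exact upcl_upcl hE
  have Dc1 : upcl E (B * C) * star (upcl E (B * C)) * upcl E (B * C) ⊆ upcl E (B * C) := by
    intro x hx
    rw [Set.mem_mul] at hx
    obtain ⟨t, ht, r, hr, rfl⟩ := hx
    rw [Set.mem_mul] at ht
    obtain ⟨p, hp, q, hq, rfl⟩ := ht
    obtain ⟨t₁, ht₁m, ht₁⟩ := hp
    rw [Set.mem_mul] at ht₁m
    obtain ⟨b, hb, c, hc, rfl⟩ := ht₁m
    have hq' : star q ∈ upcl E (B * C) := Set.mem_star.mp hq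
    obtain ⟨t₂, ht₂m, ht₂⟩ := hq'
    rw [Set.mem_mul] at ht₂m
    obtain ⟨b₂, hb₂, c₂, hc₂, rfl⟩ := ht₂m
    have h2 : Sdom E (star c₂ * star b₂) q := by
      have := sdom_star hE ht₂
      rw [star_star, star_mul] at this
      exact this
    obtain ⟨t₃, ht₃m, ht₃⟩ := hr
    rw [Set.mem_mul] at ht₃m
    obtain ⟨b₃, hb₃, c₃, hc₃, rfl⟩ := ht₃m
    have hyx : Sdom E ((b * c) * (star c₂ * star b₂) * (b₃ * c₃)) (p * q * r) :=
      sdom_mul hE (sdom_mul hE ht₁ h2) ht₃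
    -- now produce an element of B*C below the product
    obtain ⟨d₁, hd₁, d₂, hd₂, hdd⟩ := hBBE hb₂ hb₃
    obtain ⟨b', hb', hsb'⟩ := lowB hb
    obtain ⟨c', hc', hsc'⟩ := lowC hc
    obtain ⟨c₂', hc₂', hsc₂'⟩ := lowC hc₂
    obtain ⟨c₃', hc₃', hsc₃'⟩ := lowC hc₃
    have s₁ : Sdom E (c' * star c₂') (c * star c₂) :=
      sdom_mul hE hsc' (sdom_star hE hsc₂')
    have s₂ := sdom_mul hE s₁ hdd
    have s₃ := sdom_mul hE s₂ hsc₃'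
    have s₄ := sdom_mul hE hsb' s₃
    have hz : Sdom E (b' * ((c' * star c₂' * d₁) * star d₂ * c₃'))
        ((b * c) * (star c₂ * star b₂) * (b₃ * c₃)) := by
      refine sdom_of_eq s₄ (by simp only [mul_assoc]) (by simp only [mul_assoc])
    have hwC : (c' * star c₂' * d₁) * star d₂ * c₃' ∈ C := by
      apply hC.1
      refine Set.mul_mem_mul (Set.mul_mem_mul ?_ (Set.star_mem_star.mpr hd₂)) hc₃'
      apply hC.1
      exact Set.mul_mem_mul (Set.mul_mem_mul hc' (Set.star_mem_star.mpr hc₂')) hd₁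
    exact ⟨b' * ((c' * star c₂' * d₁) * star d₂ * c₃'),
      Set.mul_mem_mul hb' hwC, sdom_trans hE hz hyx⟩
  have Dcoset : IsCoset E (upcl E (B * C)) := ⟨Dc1, Dc2⟩
  have Dne : (upcl E (B * C)).Nonempty := by
    obtain ⟨b₀, hb₀⟩ := hBne
    obtain ⟨c₀, hc₀⟩ := hCne
    exact ⟨b₀ * c₀, memBC hb₀ hc₀⟩
  have Dc : ∀ c ∈ C, upcl E (B * C) = upcl E (B * {c}) := by
    intro c hc
    apply Set.Subset.antisymm
    · rintro x ⟨t, htm, hts⟩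
      rw [Set.mem_mul] at htm
      obtain ⟨b, hb, c₁, hc₁, rfl⟩ := htm
      obtain ⟨c₁', hc₁', hsc₁'⟩ := lowC hc₁
      obtain ⟨c'', hc'', hsc''⟩ := lowC hc
      obtain ⟨b₁, hb₁, b₂, hb₂, hu⟩ := hCCE hc₁' hc''
      have m : Sdom E ((star b₁ * b₂) * c) c₁ := m9 hE hu hsc'' hsc₁'
      obtain ⟨b', hb', hsb'⟩ := lowB hb
      have s := sdom_mul hE hsb' m
      have hz : Sdom E ((b' * star b₁ * b₂) * c) (b * c₁) :=
        sdom_of_eq s (by simp only [mul_assoc]) rfl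
      have hbm : b' * star b₁ * b₂ ∈ B := by
        apply hB.1
        exact Set.mul_mem_mul (Set.mul_mem_mul hb' (Set.star_mem_star.mpr hb₁)) hb₂
      exact ⟨(b' * star b₁ * b₂) * c,
        Set.mul_mem_mul hbm (Set.mem_singleton c), sdom_trans hE hz hts⟩
    · rintro x ⟨t, htm, hts⟩
      rw [Set.mem_mul] at htm
      obtain ⟨b, hb, c', hc', rfl⟩ := htm
      have hc'c : c' = c := Set.eq_of_mem_singleton hc'
      subst hc'c
      obtain ⟨z, hz, hsz⟩ := memBC hb hc
      exact ⟨z, hz, sdom_trans hE hsz hts⟩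
  -- part (ii), first equation
  have G2 : upcl E (upcl E (B * C) * star (upcl E (B * C))) = upcl E (B * star B) := by
    apply Set.Subset.antisymm
    · rintro x ⟨t, htm, hts⟩
      rw [Set.mem_mul] at htm
      obtain ⟨p, hp, q, hq, rfl⟩ := htm
      obtain ⟨t₁, ht₁m, ht₁⟩ := hp
      rw [Set.mem_mul] at ht₁m
      obtain ⟨b, hb, c, hc, rfl⟩ := ht₁m
      have hq' : star q ∈ upcl E (B * C) := Set.mem_star.mp hq
      obtain ⟨t₂, ht₂m, ht₂⟩ := hq'
      rw [Set.mem_mul] at ht₂m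
      obtain ⟨b₂, hb₂, c₂, hc₂, rfl⟩ := ht₂m
      have h2 : Sdom E (star c₂ * star b₂) q := by
        have := sdom_star hE ht₂
        rw [star_star, star_mul] at this
        exact this
      have hyx : Sdom E ((b * c) * (star c₂ * star b₂)) (p * q) := sdom_mul hE ht₁ h2
      obtain ⟨b₃, hb₃, b₄, hb₄, hbb⟩ := hCCE hc hc₂
      obtain ⟨b', hb', hsb'⟩ := lowB hb
      obtain ⟨b₂', hb₂', hsb₂'⟩ := lowB hb₂
      have s₁ := sdom_mul hE hsb' hbb
      have s₂ := sdom_mul hE s₁ (sdom_star hE hsb₂')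
      have hz : Sdom E ((b' * star b₃ * b₄) * star b₂')
          ((b * c) * (star c₂ * star b₂)) :=
        sdom_of_eq s₂ (by simp only [mul_assoc]) (by simp only [star_mul, mul_assoc])
      have hbm : b' * star b₃ * b₄ ∈ B := by
        apply hB.1
        exact Set.mul_mem_mul (Set.mul_mem_mul hb' (Set.star_mem_star.mpr hb₃)) hb₄
      exact ⟨(b' * star b₃ * b₄) * star b₂',
        Set.mul_mem_mul hbm (Set.star_mem_star.mpr hb₂'),
        sdom_trans hE hz (sdom_trans hE hyx hts)⟩
    · rintro x ⟨t, htm, hts⟩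
      rw [Set.mem_mul] at htm
      obtain ⟨b, hb, w, hw, rfl⟩ := htm
      have hwB : star w ∈ B := Set.mem_star.mp hw
      obtain ⟨b₂', hb₂', hsb₂'⟩ := lowB hwB
      have hs2 : Sdom E (star b₂') w := by
        have := sdom_star hE hsb₂'
        rwa [star_star] at this
      obtain ⟨b', hb', hsb'⟩ := lowB hb
      obtain ⟨b₆, hb₆, hsb₆⟩ := lowB hb'
      obtain ⟨b₅, hb₅, hsb₅⟩ := lowB hb
      obtain ⟨c₇, hc₇, c₈, hc₈, hu⟩ := hBBE hb₅ hb₆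
      have hu' : Sdom E (c₇ * star c₈) (star b₅ * star (star b₆)) := by
        rw [star_star]; exact hu
      have m : Sdom E ((c₇ * star c₈) * star b') (star b) :=
        m9 hE hu' (sdom_star hE hsb₆) (sdom_star hE hsb₅)
      have m' : Sdom E (b' * (c₈ * star c₇)) b := by
        have := sdom_star hE m
        simp only [star_mul, star_star] at this
        exact sdom_of_eq this (by simp only [mul_assoc]) rfl
      have s := sdom_mul hE m' hs2
      have hz : Sdom E ((b' * c₈) * star (b₂' * c₇)) (b * w) :=
        sdom_of_eq s (by simp only [star_mul, mul_assoc]) rfl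
      have hm1 : b' * c₈ ∈ upcl E (B * C) := memBC hb' hc₈
      have hm2 : star (b₂' * c₇) ∈ star (upcl E (B * C)) := by
        rw [Set.mem_star, star_star]
        exact memBC hb₂' hc₇
      exact ⟨(b' * c₈) * star (b₂' * c₇), Set.mul_mem_mul hm1 hm2,
        sdom_trans hE hz hts⟩
  -- part (ii), second equation
  have G3 : upcl E (star (upcl E (B * C)) * upcl E (B * C)) = upcl E (star C * C) := by
    apply Set.Subset.antisymm
    · rintro x ⟨t, htm, hts⟩
      rw [Set.mem_mul] at htm
      obtain ⟨q, hq, p, hp, rfl⟩ := htm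
      have hq' : star q ∈ upcl E (B * C) := Set.mem_star.mp hq
      obtain ⟨t₂, ht₂m, ht₂⟩ := hq'
      rw [Set.mem_mul] at ht₂m
      obtain ⟨b₂, hb₂, c₂, hc₂, rfl⟩ := ht₂m
      have h2 : Sdom E (star c₂ * star b₂) q := by
        have := sdom_star hE ht₂
        rw [star_star, star_mul] at this
        exact this
      obtain ⟨t₁, ht₁m, ht₁⟩ := hp
      rw [Set.mem_mul] at ht₁m
      obtain ⟨b, hb, c, hc, rfl⟩ := ht₁m
      have hyx : Sdom E ((star c₂ * star b₂) * (b * c)) (q * p) := sdom_mul hE h2 ht₁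
      obtain ⟨d₁, hd₁, d₂, hd₂, hdd⟩ := hBBE hb₂ hb
      obtain ⟨c₂', hc₂', hsc₂'⟩ := lowC hc₂
      obtain ⟨c', hc', hsc'⟩ := lowC hc
      have s₁ := sdom_mul hE (sdom_star hE hsc₂') hdd
      have s₂ := sdom_mul hE s₁ hsc'
      have hz : Sdom E (star c₂' * (d₁ * star d₂ * c'))
          ((star c₂ * star b₂) * (b * c)) :=
        sdom_of_eq s₂ (by simp only [mul_assoc]) (by simp only [mul_assoc])
      have hwC : d₁ * star d₂ * c' ∈ C := by
        apply hC.1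
        exact Set.mul_mem_mul (Set.mul_mem_mul hd₁ (Set.star_mem_star.mpr hd₂)) hc'
      exact ⟨star c₂' * (d₁ * star d₂ * c'),
        Set.mul_mem_mul (Set.star_mem_star.mpr hc₂') hwC,
        sdom_trans hE hz (sdom_trans hE hyx hts)⟩
    · rintro x ⟨t, htm, hts⟩
      rw [Set.mem_mul] at htm
      obtain ⟨w, hw, c₂, hc₂, rfl⟩ := htm
      have hwC : star w ∈ C := Set.mem_star.mp hw
      obtain ⟨c', hc', hsc'⟩ := lowC hwC
      have hw' : Sdom E (star c') w := by
        have := sdom_star hE hsc'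
        rwa [star_star] at this
      obtain ⟨c₂', hc₂', hsc₂'⟩ := lowC hc₂
      obtain ⟨c₂n, hc₂n, hsc₂n⟩ := lowC hc₂'
      obtain ⟨c₂m, hc₂m, hsc₂m⟩ := lowC hc₂n
      obtain ⟨b₁, hb₁, b₂, hb₂, hu⟩ := hCCE hc₂' hc₂m
      have m : Sdom E ((star b₁ * b₂) * c₂n) c₂ := m9 hE hu hsc₂m hsc₂'
      have s := sdom_mul hE hw' m
      have hz : Sdom E (star (b₁ * c') * (b₂ * c₂n)) (w * c₂) :=
        sdom_of_eq s (by simp only [star_mul, mul_assoc]) rfl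
      have hm1 : star (b₁ * c') ∈ star (upcl E (B * C)) := by
        rw [Set.mem_star, star_star]
        exact memBC hb₁ hc'
      exact ⟨star (b₁ * c') * (b₂ * c₂n), Set.mul_mem_mul hm1 (memBC hb₂ hc₂n),
        sdom_trans hE hz hts⟩
  -- part (iii)
  have G4 : upcl E (upcl E (C * star C) * C) = C := by
    apply Set.Subset.antisymm
    · rintro x ⟨t, htm, hts⟩
      rw [Set.mem_mul] at htm
      obtain ⟨u, hu, c, hc, rfl⟩ := htm
      obtain ⟨s, hsm, hsu⟩ := hu
      rw [Set.mem_mul] at hsm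
      obtain ⟨c₁, hc₁, w, hw, rfl⟩ := hsm
      obtain ⟨c', hc', hsc'⟩ := lowC hc
      have hzC : (c₁ * w) * c' ∈ C := by
        apply hC.1
        exact Set.mul_mem_mul (Set.mul_mem_mul hc₁ hw) hc'
      have hz : Sdom E ((c₁ * w) * c') (u * c) := sdom_mul hE hsu hsc'
      rw [hC.2]
      exact ⟨(c₁ * w) * c', hzC, sdom_trans hE hz hts⟩
    · intro c hc
      obtain ⟨c₁, hc₁, hsc₁⟩ := lowC hc
      obtain ⟨c₂, hc₂, hsc₂⟩ := lowC hc₁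
      obtain ⟨c₂', hc₂', hsc₂'⟩ := lowC hc₂
      obtain ⟨c₁', hc₁', hsc₁'⟩ := lowC hc₁
      have hu₀ : c₂ * star c₁ ∈ upcl E (C * star C) :=
        ⟨c₂' * star c₁', Set.mul_mem_mul hc₂' (Set.star_mem_star.mpr hc₁'),
          sdom_mul hE hsc₂' (sdom_star hE hsc₁')⟩
      have hts : Sdom E (c₂ * star c₁ * c₁) c := by
        rw [← hsc₂.2]
        exact sdom_trans hE hsc₂ hsc₁
      exact ⟨c₂ * star c₁ * c₁, Set.mul_mem_mul hu₀ hc₁, hts⟩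
  refine ⟨fun c hc => ⟨Dcoset, Dne, Dc c hc⟩, G2, G3, G4, ?_⟩
  -- part (iv)
  intro A' hA' _hA'ne _hAB
  have lowA : ∀ {a : S}, a ∈ A' → ∃ a' ∈ A', Sdom E a' a := by
    intro a ha; rw [hA'.2] at ha; exact ha
  have memAB : ∀ {a b : S}, a ∈ A' → b ∈ B → a * b ∈ upcl E (A' * B) := by
    intro a b ha hb
    obtain ⟨a', ha', hsa⟩ := lowA ha
    obtain ⟨b', hb', hsb⟩ := lowB hb
    exact ⟨a' * b', Set.mul_mem_mul ha' hb', sdom_mul hE hsa hsb⟩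
  constructor
  · apply Set.Subset.antisymm
    · rintro x ⟨t, htm, hts⟩
      rw [Set.mem_mul] at htm
      obtain ⟨p, hp, c, hc, rfl⟩ := htm
      obtain ⟨s, hsm, hsp⟩ := hp
      rw [Set.mem_mul] at hsm
      obtain ⟨a, ha, b, hb, rfl⟩ := hsm
      obtain ⟨c', hc', hsc'⟩ := lowC hc
      have hz : Sdom E ((a * b) * c') (p * c) := sdom_mul hE hsp hsc'
      exact ⟨(a * b) * c', Set.mul_mem_mul (Set.mul_mem_mul ha hb) hc',
        sdom_trans hE hz hts⟩
    · rintro x ⟨t, htm, hts⟩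
      rw [Set.mem_mul] at htm
      obtain ⟨s, hs, c, hc, rfl⟩ := htm
      rw [Set.mem_mul] at hs
      obtain ⟨a, ha, b, hb, rfl⟩ := hs
      obtain ⟨a', ha', hsa'⟩ := lowA ha
      obtain ⟨b', hb', hsb'⟩ := lowB hb
      obtain ⟨c', hc', hsc'⟩ := lowC hc
      have hz : Sdom E ((a' * b') * c') ((a * b) * c) :=
        sdom_mul hE (sdom_mul hE hsa' hsb') hsc'
      exact ⟨(a' * b') * c', Set.mul_mem_mul (memAB ha' hb') hc',
        sdom_trans hE hz hts⟩
  · apply Set.Subset.antisymm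
    · rintro x ⟨t, htm, hts⟩
      rw [Set.mem_mul] at htm
      obtain ⟨s, hs, c, hc, rfl⟩ := htm
      rw [Set.mem_mul] at hs
      obtain ⟨a, ha, b, hb, rfl⟩ := hs
      obtain ⟨a', ha', hsa'⟩ := lowA ha
      obtain ⟨b', hb', hsb'⟩ := lowB hb
      obtain ⟨c', hc', hsc'⟩ := lowC hc
      have hz : Sdom E (a' * (b' * c')) ((a * b) * c) :=
        sdom_of_eq (sdom_mul hE hsa' (sdom_mul hE hsb' hsc')) rfl (by
          simp only [mul_assoc])
      exact ⟨a' * (b' * c'), Set.mul_mem_mul ha' (memBC hb' hc'),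
        sdom_trans hE hz hts⟩
    · rintro x ⟨t, htm, hts⟩
      rw [Set.mem_mul] at htm
      obtain ⟨a, ha, m, hm, rfl⟩ := htm
      obtain ⟨s, hsm, hsm'⟩ := hm
      rw [Set.mem_mul] at hsm
      obtain ⟨b, hb, c, hc, rfl⟩ := hsm
      obtain ⟨a', ha', hsa'⟩ := lowA ha
      have hz : Sdom E ((a' * b) * c) (a * m) :=
        sdom_of_eq (sdom_mul hE hsa' hsm') (mul_assoc a' b c).symm rfl
      exact ⟨(a' * b) * c, Set.mul_mem_mul (Set.mul_mem_mul ha' hb) hc,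
        sdom_trans hE hz hts⟩
end

section
/- Let (S, E) be a Weyl *-semigroup and C ⊆ S nonempty. The following are equivalent: (1) C is a coset with C = (CC*)^≲ (a unit coset); (2) CC* ⊆ C = C^≲; (3) C is a *-subsemigroup (CC ⊆ C = C*) with C = C^≲; (4) C is a coset containing some element of the form a*a with a ∈ S; (5) C is a coset containing some element of E. -/
open scoped Pointwise

variable {S : Type*} [Semigroup S] [StarMul S]

namespace WeylAux

variable {E : Set S}

lemma Emul (hE : WeylPair E) {e f : S} (he : e ∈ E) (hf : f ∈ E) : e * f ∈ E := hE.1 e he f hf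

lemma estar (hE : WeylPair E) {e : S} (he : e ∈ E) : star e ∈ E := by
  have h := hE.2.1
  rw [← h]; exact ⟨e, he, rfl⟩

lemma sq (hE : WeylPair E) (a : S) : star a * a ∈ E := hE.2.2.2.1 a

lemma sq' (hE : WeylPair E) (a : S) : a * star a ∈ E := by
  simpa using hE.2.2.2.1 (star a)

lemma norm (hE : WeylPair E) (a : S) {e : S} (he : e ∈ E) : star a * e * a ∈ E := hE.2.2.1 a e he

lemma norm' (hE : WeylPair E) (a : S) {e : S} (he : e ∈ E) : a * e * star a ∈ E := by
  simpa using hE.2.2.1 (star a) e he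

lemma comm (hE : WeylPair E) (a : S) {e : S} (he : e ∈ E) :
    star a * a * e = e * (star a * a) := hE.2.2.2.2 a e he

lemma comm' (hE : WeylPair E) (a : S) {e : S} (he : e ∈ E) :
    a * star a * e = e * (a * star a) := by
  simpa using hE.2.2.2.2 (star a) e he

variable {t b s a u e : S}

lemma sdom_rev (hE : WeylPair E) (h : Sdom E t b) : b * star t ∈ E := by
  simpa [star_mul] using estar hE h.1

lemma star_eq (h : Sdom E t b) : star t = star b * (b * star t) := by
  have := congrArg star h.2
  simpa [star_mul, mul_assoc] using this

lemma star_mul_mem (hE : WeylPair E) (h : Sdom E t b) : star t * b ∈ E := by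
  have h1 : b * star t ∈ E := sdom_rev hE h
  have key : star t * b = star b * (b * star t) * b := by
    conv_lhs => rw [star_eq h]
  rw [key]; exact norm hE b h1

lemma star_absorb (hE : WeylPair E) (h : Sdom E t b) : star t * b * star b = star t := by
  have h1 : b * star t ∈ E := sdom_rev hE h
  calc star t * b * star b
      = star b * (b * star t) * b * star b := by conv_lhs => rw [star_eq h]
    _ = star b * ((b * star b) * (b * star t)) := by
        rw [comm' hE b h1]; simp only [mul_assoc]
    _ = (star b * b) * (star b * (b * star t)) := by simp only [mul_assoc]
    _ = star b * b * star t := by rw [← star_eq h]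
    _ = star t := by rw [mul_assoc, ← star_eq h]

lemma sdom_star (hE : WeylPair E) (h : Sdom E t b) : Sdom E (star t) (star b) := by
  refine ⟨?_, ?_⟩
  · rw [star_star]; exact star_mul_mem hE h
  · rw [star_star, star_absorb hE h]

lemma sdom_trans (hE : WeylPair E) (h1 : Sdom E t a) (h2 : Sdom E a b) : Sdom E t b := by
  constructor
  · have : t * star b = (t * star a) * (a * star b) := by
      conv_lhs => rw [h1.2]
      simp only [mul_assoc]
    rw [this]; exact Emul hE h1.1 h2.1
  · calc t = t * star a * a := h1.2
      _ = t * star a * (a * star b * b) := by rw [← h2.2]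
      _ = t * star b * b := by
          conv_rhs => rw [h1.2]
          simp only [mul_assoc]

/-- Lemma M : `s ≲ a`, `u ≲ b` imply `s u* ≲ a b*`. -/
lemma sdom_mul (hE : WeylPair E) (hs : Sdom E s a) (hu : Sdom E u b) :
    Sdom E (s * star u) (a * star b) := by
  have hub : star u * b ∈ E := star_mul_mem hE hu
  have hstar : star (a * star b) = b * star a := by rw [star_mul, star_star]
  have habs : s * (star a * a) = s := by rw [← mul_assoc]; exact hs.2.symm
  constructor
  · rw [hstar]
    have key : s * star u * (b * star a) = (s * star a) * (a * (star u * b) * star a) := by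
      nth_rewrite 1 [hs.2]
      simp only [mul_assoc]
    rw [key]; exact Emul hE hs.1 (norm' hE a hub)
  · rw [hstar]
    symm
    calc s * star u * (b * star a) * (a * star b)
        = s * ((star u * b) * (star a * a) * star b) := by simp only [mul_assoc]
      _ = s * ((star a * a) * (star u * b) * star b) := by rw [comm hE a hub]
      _ = (s * (star a * a)) * (star u * b * star b) := by simp only [mul_assoc]
      _ = s * star u := by rw [habs, star_absorb hE hu]

/-- P2 key: `w = (a a*) s*  ≲ a*` when `s ≲ a`. -/
lemma sdom_key2 (hE : WeylPair E) (hs : Sdom E s a) :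
    Sdom E ((a * star a) * star s) (star a) := by
  constructor
  · rw [star_star]
    have key : (a * star a) * star s * a = (a * star a) * (star s * a) := by
      simp only [mul_assoc]
    rw [key]; exact Emul hE (sq' hE a) (star_mul_mem hE hs)
  · rw [star_star]
    symm
    calc (a * star a) * star s * a * star a
        = (a * star a) * (star s * a * star a) := by simp only [mul_assoc]
      _ = (a * star a) * star s := by rw [star_absorb hE hs]

/-- P5 step A: `w = e s* (s a* e) ≲ a*`. -/
lemma sdom_key5A (hE : WeylPair E) (hs : Sdom E s a) (he : e ∈ E) :
    Sdom E ((e * star s) * ((s * star a) * e)) (star a) := by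
  constructor
  · rw [star_star]
    have key : (e * star s) * ((s * star a) * e) * a
        = e * ((star s * s) * (star a * e * a)) := by simp only [mul_assoc]
    rw [key]; exact Emul hE he (Emul hE (sq hE s) (norm hE a he))
  · rw [star_star]
    symm
    calc (e * star s) * ((s * star a) * e) * a * star a
        = e * (star s * (s * (star a * (e * (a * star a))))) := by simp only [mul_assoc]
      _ = e * (star s * (s * (star a * (a * star a * e)))) := by rw [← comm' hE a he]
      _ = e * ((star s * (s * star a * a)) * (star a * e)) := by simp only [mul_assoc]
      _ = e * ((star s * s) * (star a * e)) := by rw [← hs.2]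
      _ = (e * star s) * ((s * star a) * e) := by simp only [mul_assoc]

/-- P5 step B: `w = (s e) u* ≲ a b*`. -/
lemma sdom_key5B (hE : WeylPair E) (hs : Sdom E s a) (hu : Sdom E u b) (he : e ∈ E) :
    Sdom E ((s * e) * star u) (a * star b) := by
  have hub : star u * b ∈ E := star_mul_mem hE hu
  have hstar : star (a * star b) = b * star a := by rw [star_mul, star_star]
  have habs : s * (star a * a) = s := by rw [← mul_assoc]; exact hs.2.symm
  constructor
  · rw [hstar]
    have key : (s * e) * star u * (b * star a)
        = (s * star a) * (a * (e * (star u * b)) * star a) := by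
      nth_rewrite 1 [hs.2]
      simp only [mul_assoc]
    rw [key]; exact Emul hE hs.1 (norm' hE a (Emul hE he hub))
  · rw [hstar]
    symm
    calc (s * e) * star u * (b * star a) * (a * star b)
        = s * (e * ((star u * b) * (star a * a) * star b)) := by simp only [mul_assoc]
      _ = s * (e * ((star a * a) * (star u * b) * star b)) := by rw [comm hE a hub]
      _ = s * ((e * (star a * a)) * ((star u * b) * star b)) := by simp only [mul_assoc]
      _ = s * (((star a * a) * e) * ((star u * b) * star b)) := by rw [← comm hE a he]
      _ = (s * (star a * a)) * (e * (star u * b * star b)) := by simp only [mul_assoc]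
      _ = (s * e) * star u := by rw [habs, star_absorb hE hu]; rw [← mul_assoc]

end WeylAux

namespace WeylAux

variable {E C : Set S}

lemma smem {a : S} (ha : a ∈ C) : star a ∈ star C :=
  Set.mem_star.2 (by rw [star_star]; exact ha)

lemma pick (hup : C = upcl E C) {a : S} (ha : a ∈ C) : ∃ s ∈ C, Sdom E s a := by
  have : a ∈ upcl E C := hup ▸ ha
  exact this

lemma p2_of_p1 (hE : WeylPair E)
    (h : IsCoset E C ∧ C = upcl E (C * star C)) : C * star C ⊆ C ∧ C = upcl E C := by
  obtain ⟨⟨hco, hup⟩, huu⟩ := h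
  refine ⟨?_, hup⟩
  rintro x hx
  rw [Set.mem_mul] at hx
  obtain ⟨p, hp, q, hq, rfl⟩ := hx
  rw [Set.mem_star] at hq
  obtain ⟨s, hsC, hs⟩ := pick hup hp
  obtain ⟨u, huC, hu⟩ := pick hup hq
  have hsd : Sdom E (s * star u) (p * star (star q)) := sdom_mul hE hs hu
  rw [star_star] at hsd
  rw [huu]
  exact ⟨s * star u, Set.mul_mem_mul hsC (smem huC), hsd⟩

lemma starmem_of_p2 (hE : WeylPair E) (h2 : C * star C ⊆ C ∧ C = upcl E C)
    {a : S} (ha : a ∈ C) : star a ∈ C := by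
  obtain ⟨hcc, hup⟩ := h2
  obtain ⟨s, hsC, hs⟩ := pick hup ha
  have hw : (a * star a) * star s ∈ C :=
    hcc (Set.mul_mem_mul (hcc (Set.mul_mem_mul ha (smem ha))) (smem hsC))
  rw [hup]
  exact ⟨_, hw, sdom_key2 hE hs⟩

lemma p3_of_p2 (hE : WeylPair E) (h2 : C * star C ⊆ C ∧ C = upcl E C) :
    C * C ⊆ C ∧ star C = C ∧ C = upcl E C := by
  have hstar : star C = C := by
    ext x
    constructor
    · intro hx
      have := starmem_of_p2 hE h2 (Set.mem_star.1 hx)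
      rwa [star_star] at this
    · intro hx
      exact Set.mem_star.2 (starmem_of_p2 hE h2 hx)
  refine ⟨?_, hstar, h2.2⟩
  rintro x hx
  rw [Set.mem_mul] at hx
  obtain ⟨p, hp, q, hq, rfl⟩ := hx
  have : q ∈ star C := hstar.symm ▸ hq
  exact h2.1 (Set.mul_mem_mul hp this)

lemma p2_of_p3 (h3 : C * C ⊆ C ∧ star C = C ∧ C = upcl E C) :
    C * star C ⊆ C ∧ C = upcl E C := by
  refine ⟨?_, h3.2.2⟩
  rw [h3.2.1]
  exact h3.1

lemma p1_of_p2 (hE : WeylPair E) (h2 : C * star C ⊆ C ∧ C = upcl E C) :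
    IsCoset E C ∧ C = upcl E (C * star C) := by
  have h3 := p3_of_p2 hE h2
  have hco : C * star C * C ⊆ C := by
    rintro x hx
    rw [Set.mem_mul] at hx
    obtain ⟨p, hp, q, hq, rfl⟩ := hx
    exact h3.1 (Set.mul_mem_mul (h2.1 hp) hq)
  refine ⟨⟨hco, h2.2⟩, ?_⟩
  ext x
  constructor
  · intro hx
    obtain ⟨s, hsC, hs⟩ := pick h2.2 hx
    have hmem : (s * star x) * x ∈ C * star C :=
      Set.mul_mem_mul (h2.1 (Set.mul_mem_mul hsC (smem hx)))
        (Set.mem_star.2 (starmem_of_p2 hE h2 hx))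
    exact ⟨s, hs.2.symm ▸ hmem, hs⟩
  · rintro ⟨t, ht, htx⟩
    rw [h2.2]
    exact ⟨t, h2.1 ht, htx⟩

lemma p4_of_p1 (hE : WeylPair E) (hne : C.Nonempty)
    (h : IsCoset E C ∧ C = upcl E (C * star C)) :
    IsCoset E C ∧ ∃ a : S, star a * a ∈ C := by
  have h2 := p2_of_p1 hE h
  obtain ⟨a, ha⟩ := hne
  obtain ⟨s, hsC, hs⟩ := pick h2.2 ha
  refine ⟨h.1, star s, ?_⟩
  rw [star_star]
  exact h2.1 (Set.mul_mem_mul hsC (smem hsC))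

lemma p5_of_p4 (hE : WeylPair E) (h : IsCoset E C ∧ ∃ a : S, star a * a ∈ C) :
    IsCoset E C ∧ ∃ e ∈ E, e ∈ C := by
  obtain ⟨hc, a, ha⟩ := h
  exact ⟨hc, star a * a, sq hE a, ha⟩

lemma p2_of_p5 (hE : WeylPair E) (h5 : IsCoset E C ∧ ∃ e ∈ E, e ∈ C) :
    C * star C ⊆ C ∧ C = upcl E C := by
  obtain ⟨⟨hco, hup⟩, e, heE, heC⟩ := h5
  have stA : ∀ a ∈ C, star a ∈ C := by
    intro a ha
    obtain ⟨s, hsC, hs⟩ := pick hup ha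
    have hz : (s * star a) * e ∈ C :=
      hco (Set.mul_mem_mul (Set.mul_mem_mul hsC (smem ha)) heC)
    have hw : (e * star s) * ((s * star a) * e) ∈ C :=
      hco (Set.mul_mem_mul (Set.mul_mem_mul heC (smem hsC)) hz)
    rw [hup]
    exact ⟨_, hw, sdom_key5A hE hs heE⟩
  refine ⟨?_, hup⟩
  rintro x hx
  rw [Set.mem_mul] at hx
  obtain ⟨p, hp, q, hq, rfl⟩ := hx
  rw [Set.mem_star] at hq
  obtain ⟨s, hsC, hs⟩ := pick hup hp
  obtain ⟨u, huC, hu⟩ := pick hup hq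
  have hw : (s * e) * star u ∈ C :=
    hco (Set.mul_mem_mul (Set.mul_mem_mul hsC (Set.mem_star.2 (stA e heC))) (stA u huC))
  have hsd := sdom_key5B hE hs hu heE
  rw [star_star] at hsd
  rw [hup]
  exact ⟨_, hw, hsd⟩

end WeylAux

open WeylAux

theorem stmt5 (E : Set S) (hE : WeylPair E) (C : Set S) (hne : C.Nonempty) :
    ((IsCoset E C ∧ C = upcl E (C * star C)) ↔ (C * star C ⊆ C ∧ C = upcl E C)) ∧
    ((IsCoset E C ∧ C = upcl E (C * star C)) ↔
      (C * C ⊆ C ∧ star C = C ∧ C = upcl E C)) ∧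
    ((IsCoset E C ∧ C = upcl E (C * star C)) ↔
      (IsCoset E C ∧ ∃ a : S, star a * a ∈ C)) ∧
    ((IsCoset E C ∧ C = upcl E (C * star C)) ↔
      (IsCoset E C ∧ ∃ e ∈ E, e ∈ C)) := by
  refine ⟨⟨p2_of_p1 hE, p1_of_p2 hE⟩,
    ⟨fun h => p3_of_p2 hE (p2_of_p1 hE h), fun h => p1_of_p2 hE (p2_of_p3 h)⟩,
    ⟨p4_of_p1 hE hne, fun h => p1_of_p2 hE (p2_of_p5 hE (p5_of_p4 hE h))⟩,
    ⟨fun h => p5_of_p4 hE (p4_of_p1 hE hne h), fun h => p1_of_p2 hE (p2_of_p5 hE h)⟩⟩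
end

section
/- Let (S, E) be a Weyl *-semigroup. Then: (i) every filter U ⊆ S is a coset (UU*U ⊆ U = U^≲); (ii) U is a filter if and only if U* is a filter; (iii) a nonempty coset U is a filter if and only if (U*U)^≲ is a filter. (Thus the filters form an ideal in the coset groupoid.) -/
open scoped Pointwise

variable {S : Type*} [Semigroup S] [StarMul S]

/-- A filter is a nonempty `U` such that `a, b ∈ U` iff some `c ∈ U` has `c ≲ a, b`. -/
def IsFilt (E : Set S) (U : Set S) : Prop :=
  U.Nonempty ∧ ∀ a b : S, (a ∈ U ∧ b ∈ U) ↔ ∃ c ∈ U, Sdom E c a ∧ Sdom E c b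

section WeylAux

variable {E : Set S}

private lemma hmulE (hE : WeylPair E) {x y : S} (hx : x ∈ E) (hy : y ∈ E) : x * y ∈ E :=
  hE.1 x hx y hy

private lemma hstarE (hE : WeylPair E) {x : S} (hx : x ∈ E) : star x ∈ E := by
  rw [← hE.2.1]; exact ⟨x, hx, rfl⟩

private lemma conjE (hE : WeylPair E) {e : S} (he : e ∈ E) (s : S) : star s * (e * s) ∈ E := by
  have := hE.2.2.1 s e he; rwa [mul_assoc] at this

private lemma conjE' (hE : WeylPair E) {e : S} (he : e ∈ E) (s : S) : s * (e * star s) ∈ E := by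
  have := conjE hE he (star s); rwa [star_star] at this

private lemma sqE (hE : WeylPair E) (s : S) : star s * s ∈ E := hE.2.2.2.1 s

private lemma sqE' (hE : WeylPair E) (s : S) : s * star s ∈ E := by
  have := sqE hE (star s); rwa [star_star] at this

private lemma commE (hE : WeylPair E) {e : S} (he : e ∈ E) (s : S) :
    star s * s * e = e * (star s * s) := hE.2.2.2.2 s e he

private lemma commE' (hE : WeylPair E) {e : S} (he : e ∈ E) (s : S) :
    s * star s * e = e * (s * star s) := by
  have := commE hE he (star s); rwa [star_star] at this

variable {q a b : S}

private lemma dR (h : Sdom E q a) : q * (star a * a) = q := by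
  rw [← mul_assoc]; exact h.2.symm

private lemma dR' (h : Sdom E q a) (x : S) : q * (star a * (a * x)) = q * x := by
  have hx : q * (star a * (a * x)) = (q * (star a * a)) * x := by simp only [mul_assoc]
  rw [hx, dR h]

private lemma dL (hE : WeylPair E) (h : Sdom E q a) : a * (star a * q) = q := by
  have hc := commE' hE h.1 a
  simp only [mul_assoc] at hc
  calc a * (star a * q)
      = a * (star a * (q * (star a * a))) := by rw [dR h]
    _ = (a * (star a * (q * star a))) * a := by simp only [mul_assoc]
    _ = (q * (star a * (a * star a))) * a := by rw [hc]
    _ = q * (star a * (a * (star a * a))) := by simp only [mul_assoc]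
    _ = q * (star a * a) := by rw [dR' h (star a * a)]
    _ = q := dR h

private lemma dL' (hE : WeylPair E) (h : Sdom E q a) (x : S) :
    a * (star a * (q * x)) = q * x := by
  have hx : a * (star a * (q * x)) = (a * (star a * q)) * x := by simp only [mul_assoc]
  rw [hx, dL hE h]

private lemma dstar (h : Sdom E q a) : star a * (a * star q) = star q := by
  conv_rhs => rw [h.2]
  simp only [star_mul, star_star, mul_assoc]

private lemma dRs (hE : WeylPair E) (h : Sdom E q a) : star q * (a * star a) = star q := by
  have := congrArg star (dL hE h)
  simpa [star_mul, star_star, mul_assoc] using this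

private lemma dRs' (hE : WeylPair E) (h : Sdom E q a) (x : S) :
    star q * (a * (star a * x)) = star q * x := by
  have hx : star q * (a * (star a * x)) = (star q * (a * star a)) * x := by
    simp only [mul_assoc]
  rw [hx, dRs hE h]

private lemma mAQ (hE : WeylPair E) (h : Sdom E q a) : a * star q ∈ E := by
  have := hstarE hE h.1; rwa [star_mul, star_star] at this

private lemma mQsA (hE : WeylPair E) (h : Sdom E q a) : star q * a ∈ E := by
  have key : star q * a = star a * ((a * star q) * a) := by
    conv_lhs => rw [← dstar h]
    simp only [mul_assoc]
  rw [key]; exact conjE hE (mAQ hE h) a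

private lemma mAsQ (hE : WeylPair E) (h : Sdom E q a) : star a * q ∈ E := by
  have := hstarE hE (mQsA hE h); rwa [star_mul, star_star] at this

private lemma dom_star (hE : WeylPair E) (h : Sdom E q a) : Sdom E (star q) (star a) := by
  constructor
  · rw [star_star]; exact mQsA hE h
  · rw [star_star, mul_assoc]; exact (dRs hE h).symm

private lemma dom_trans (hE : WeylPair E) (h₁ : Sdom E q a) (h₂ : Sdom E a b) :
    Sdom E q b := by
  constructor
  · have key : q * star b = (q * star a) * (a * star b) := by
      conv_lhs => rw [h₁.2]
      simp only [mul_assoc]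
    rw [key]; exact hmulE hE h₁.1 h₂.1
  · calc q = q * star a * a := h₁.2
      _ = q * star a * (a * star b * b) := by rw [← h₂.2]
      _ = q * star b * b := by
          conv_rhs => rw [h₁.2]
          simp only [mul_assoc]

private lemma dom_mul (hE : WeylPair E) {a₀ a b₀ b : S}
    (h₁ : Sdom E a₀ a) (h₂ : Sdom E b₀ b) : Sdom E (star a₀ * b₀) (star a * b) := by
  have hs : star (star a * b) = star b * a := by simp only [star_mul, star_star]
  constructor
  · rw [hs]
    have key : star a₀ * b₀ * (star b * a)
        = star a * (((a * star a₀) * (b₀ * star b)) * a) := by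
      conv_lhs => rw [← dstar h₁]
      simp only [mul_assoc]
    rw [key]
    exact conjE hE (hmulE hE (mAQ hE h₁) h₂.1) a
  · rw [hs]
    have hc2 := congrArg (· * b) (commE' hE h₂.1 a).symm
    simp only [mul_assoc] at hc2
    have key : star a₀ * b₀ * (star b * a) * (star a * b) = star a₀ * b₀ := by
      calc star a₀ * b₀ * (star b * a) * (star a * b)
          = star a₀ * (b₀ * (star b * (a * (star a * b)))) := by simp only [mul_assoc]
        _ = star a₀ * (a * (star a * (b₀ * (star b * b)))) := by rw [hc2]
        _ = star a₀ * (b₀ * (star b * b)) := dRs' hE h₁ _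
        _ = star a₀ * b₀ := by rw [dR h₂]
    exact key.symm

private lemma dom_triple (hE : WeylPair E) {r q u v w : S}
    (hrq : Sdom E r q) (hqv : Sdom E q v) (hqw : Sdom E q w)
    (hru : Sdom E r u) (hrv : Sdom E r v) (hrw : Sdom E r w) :
    Sdom E r (u * star v * w) := by
  have hs : star (u * star v * w) = star w * (v * star u) := by
    simp only [star_mul, star_star, mul_assoc]
  constructor
  · rw [hs]
    have hc := commE' hE hrw.1 q
    simp only [mul_assoc] at hc
    have hc2 := congrArg (· * (v * star u)) hc
    simp only [mul_assoc] at hc2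
    have key : r * (star w * (v * star u))
        = u * (((star u * r) * ((star w * q) * (star q * v))) * star u) := by
      calc r * (star w * (v * star u))
          = q * (star q * (r * (star w * (v * star u)))) := (dL' hE hrq _).symm
        _ = r * (star w * (q * (star q * (v * star u)))) := hc2
        _ = u * (star u * (r * (star w * (q * (star q * (v * star u)))))) :=
            (dL' hE hru _).symm
        _ = u * (((star u * r) * ((star w * q) * (star q * v))) * star u) := by
            simp only [mul_assoc]
    rw [key]
    exact conjE' hE (hmulE hE (mAsQ hE hru) (hmulE hE (mAsQ hE hqw) (mQsA hE hqv))) u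
  · rw [hs]
    have hc := commE hE hrw.1 (u * star v)
    simp only [star_mul, star_star, mul_assoc] at hc
    have hc2 := congrArg (· * w) hc.symm
    simp only [mul_assoc] at hc2
    have hc3 := commE hE (mAsQ hE hrv) u
    simp only [mul_assoc] at hc3
    have key : r * (star w * (v * (star u * (u * (star v * w))))) = r := by
      calc r * (star w * (v * (star u * (u * (star v * w)))))
          = v * (star u * (u * (star v * (r * (star w * w))))) := hc2
        _ = v * (star u * (u * (star v * r))) := by rw [dR hrw]
        _ = v * (star v * (r * (star u * u))) := by rw [hc3]
        _ = r * (star u * u) := dL' hE hrv _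
        _ = r := dR hru
    have hshape : r * (star w * (v * star u)) * (u * star v * w)
        = r * (star w * (v * (star u * (u * (star v * w))))) := by simp only [mul_assoc]
    rw [hshape, key]

private lemma dom_act (hE : WeylPair E) {a₀ a v t : S} (h₀ : Sdom E a₀ a)
    (h₁ : Sdom E t (star a₀ * a)) (h₂ : Sdom E t (star a₀ * v)) :
    Sdom E (a₀ * t) v := by
  have hs : star (star a₀ * v) = star v * a₀ := by simp only [star_mul, star_star]
  have he₁ : t * (star v * a₀) ∈ E := by have := h₂.1; rwa [hs] at this
  have hFmem : a₀ * ((t * (star v * a₀)) * star a₀) ∈ E := conjE' hE he₁ a₀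
  set F := a₀ * ((t * (star v * a₀)) * star a₀) with hFdef
  have A : a₀ * t = F * v := by
    conv_lhs => rw [h₂.2]
    rw [hs, hFdef]
    simp only [mul_assoc]
  constructor
  · have hx : (a₀ * t) * star v = F * (v * star v) := by rw [A, mul_assoc]
    rw [hx]
    exact hmulE hE hFmem (sqE' hE v)
  · have hst := dL hE h₁
    simp only [star_mul, star_star, mul_assoc] at hst
    have hABs : a₀ * t = (a₀ * t) * (star v * (a₀ * (star a₀ * v))) := by
      conv_lhs => rw [h₂.2]
      rw [hs]; simp only [mul_assoc]
    have star1 : a₀ * t = F * (v * (star v * (a₀ * (star a₀ * v)))) := by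
      calc a₀ * t = (a₀ * t) * (star v * (a₀ * (star a₀ * v))) := hABs
        _ = (F * v) * (star v * (a₀ * (star a₀ * v))) := by rw [A]
        _ = F * (v * (star v * (a₀ * (star a₀ * v)))) := by rw [mul_assoc]
    have Fexp : a * (star a * F) = F := by rw [hFdef]; exact dL' hE h₀ _
    have star2 : a₀ * t = a * (star a * (F * (v * (star v * (a₀ * (star a₀ * v)))))) := by
      rw [star1]
      conv_lhs => rw [← Fexp]
      simp only [mul_assoc]
    have hemem : (a * star a) * (F * (v * star v)) ∈ E :=
      hmulE hE (sqE' hE a) (hmulE hE hFmem (sqE' hE v))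
    have hc2 := congrArg (· * v) (commE' hE hemem a₀)
    simp only [mul_assoc] at hc2
    have hstA : a₀ * (star a₀ * (a * (star a * (a₀ * t)))) = a₀ * t := by rw [hst]
    have main : (a₀ * t) * (star v * v) = a₀ * t := by
      calc (a₀ * t) * (star v * v)
          = (a₀ * (star a₀ * (a * (star a * (a₀ * t))))) * (star v * v) := by rw [hstA]
        _ = (a₀ * (star a₀ * (a * (star a * (F * v))))) * (star v * v) := by rw [A]
        _ = a₀ * (star a₀ * (a * (star a * (F * (v * (star v * v)))))) := by
            simp only [mul_assoc]
        _ = a * (star a * (F * (v * (star v * (a₀ * (star a₀ * v)))))) := hc2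
        _ = a₀ * t := star2.symm
    calc a₀ * t = (a₀ * t) * (star v * v) := main.symm
      _ = a₀ * t * star v * v := (mul_assoc (a₀ * t) (star v) v).symm

end WeylAux

theorem stmt6 (E : Set S) (hE : WeylPair E) :
    (∀ U : Set S, IsFilt E U → IsCoset E U) ∧
    (∀ U : Set S, IsFilt E U ↔ IsFilt E (star U)) ∧
    (∀ U : Set S, IsCoset E U → U.Nonempty →
      (IsFilt E U ↔ IsFilt E (upcl E (star U * U)))) := by
  refine ⟨?_, ?_, ?_⟩
  · -- (i) every filter is a coset
    rintro U ⟨hne, hU⟩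
    have hupcl : U = upcl E U := by
      ext x
      constructor
      · intro hx
        obtain ⟨c, hc, h1, -⟩ := (hU x x).mp ⟨hx, hx⟩
        exact ⟨c, hc, h1⟩
      · rintro ⟨t, ht, hd⟩
        exact ((hU x x).mpr ⟨t, ht, hd, hd⟩).1
    refine ⟨?_, hupcl⟩
    rintro x hx
    rw [Set.mem_mul] at hx
    obtain ⟨y, hy, w, hw, rfl⟩ := hx
    rw [Set.mem_mul] at hy
    obtain ⟨u, hu, sv, hsv, rfl⟩ := hy
    rw [Set.mem_star] at hsv
    obtain ⟨p, hp, hpu, hpv⟩ := (hU u (star sv)).mp ⟨hu, hsv⟩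
    obtain ⟨q, hq, hqp, hqw⟩ := (hU p w).mp ⟨hp, hw⟩
    obtain ⟨r, hr, hrq, -⟩ := (hU q q).mp ⟨hq, hq⟩
    have hqu := dom_trans hE hqp hpu
    have hqv := dom_trans hE hqp hpv
    have hd : Sdom E r (u * star (star sv) * w) :=
      dom_triple hE hrq hqv hqw (dom_trans hE hrq hqu) (dom_trans hE hrq hqv)
        (dom_trans hE hrq hqw)
    rw [star_star] at hd
    exact ((hU _ _).mpr ⟨r, hr, hd, hd⟩).1
  · -- (ii) U is a filter iff U* is
    have main : ∀ U : Set S, IsFilt E U → IsFilt E (star U) := by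
      rintro U ⟨⟨u, hu⟩, hU⟩
      refine ⟨⟨star u, ?_⟩, ?_⟩
      · rw [Set.mem_star, star_star]; exact hu
      · intro x y
        constructor
        · rintro ⟨hx, hy⟩
          rw [Set.mem_star] at hx hy
          obtain ⟨c, hc, h1, h2⟩ := (hU (star x) (star y)).mp ⟨hx, hy⟩
          refine ⟨star c, ?_, ?_, ?_⟩
          · rw [Set.mem_star, star_star]; exact hc
          · have := dom_star hE h1; rwa [star_star] at this
          · have := dom_star hE h2; rwa [star_star] at this
        · rintro ⟨z, hz, h1, h2⟩
          rw [Set.mem_star] at hz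
          have := (hU (star x) (star y)).mpr ⟨star z, hz, dom_star hE h1, dom_star hE h2⟩
          exact ⟨Set.mem_star.mpr this.1, Set.mem_star.mpr this.2⟩
    intro U
    refine ⟨main U, fun h => ?_⟩
    have := main (star U) h
    rwa [star_star] at this
  · -- (iii)
    intro U hC hne
    obtain ⟨htriple, hupcl⟩ := hC
    obtain ⟨u₀, hu₀⟩ := hne
    constructor
    · rintro ⟨-, hU⟩
      constructor
      · -- nonempty
        obtain ⟨q, hq, hqu, -⟩ := (hU u₀ u₀).mp ⟨hu₀, hu₀⟩
        obtain ⟨r, hr, hrq, -⟩ := (hU q q).mp ⟨hq, hq⟩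
        exact ⟨star q * q, star r * r,
          Set.mul_mem_mul (by rw [Set.mem_star, star_star]; exact hr) hr,
          dom_mul hE hrq hrq⟩
      · intro x y
        constructor
        · rintro ⟨⟨t₁, ht₁, hd₁⟩, ⟨t₂, ht₂, hd₂⟩⟩
          rw [Set.mem_mul] at ht₁ ht₂
          obtain ⟨su₁, hsu₁, v₁, hv₁, rfl⟩ := ht₁
          obtain ⟨su₂, hsu₂, v₂, hv₂, rfl⟩ := ht₂
          rw [Set.mem_star] at hsu₁ hsu₂
          obtain ⟨p₁, hp₁, hp₁u, hp₁v⟩ := (hU (star su₁) v₁).mp ⟨hsu₁, hv₁⟩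
          obtain ⟨p₂, hp₂, hp₂u, hp₂v⟩ := (hU (star su₂) v₂).mp ⟨hsu₂, hv₂⟩
          obtain ⟨q, hq, hqp₁, hqp₂⟩ := (hU p₁ p₂).mp ⟨hp₁, hp₂⟩
          obtain ⟨r, hr, hrq, -⟩ := (hU q q).mp ⟨hq, hq⟩
          have hz1 : Sdom E (star q * q) (su₁ * v₁) := by
            have := dom_mul hE (dom_trans hE hqp₁ hp₁u) (dom_trans hE hqp₁ hp₁v)
            rwa [star_star] at this
          have hz2 : Sdom E (star q * q) (su₂ * v₂) := by
            have := dom_mul hE (dom_trans hE hqp₂ hp₂u) (dom_trans hE hqp₂ hp₂v)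
            rwa [star_star] at this
          exact ⟨star q * q,
            ⟨star r * r,
              Set.mul_mem_mul (by rw [Set.mem_star, star_star]; exact hr) hr,
              dom_mul hE hrq hrq⟩,
            dom_trans hE hz1 hd₁, dom_trans hE hz2 hd₂⟩
        · rintro ⟨z, ⟨t, ht, htz⟩, h1, h2⟩
          exact ⟨⟨t, ht, dom_trans hE htz h1⟩, ⟨t, ht, dom_trans hE htz h2⟩⟩
    · rintro ⟨-, hV⟩
      refine ⟨⟨u₀, hu₀⟩, ?_⟩
      intro a b
      constructor
      · rintro ⟨ha, hb⟩
        have ha' := ha; rw [hupcl] at ha'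
        obtain ⟨a₀, ha₀, h₀⟩ := ha'
        have ha₀' := ha₀; rw [hupcl] at ha₀'
        obtain ⟨a₁, ha₁, h₁⟩ := ha₀'
        have hb' := hb; rw [hupcl] at hb'
        obtain ⟨b₀, hb₀, hb₀b⟩ := hb'
        have hx : (star a₀ * a) ∈ upcl E (star U * U) :=
          ⟨star a₁ * a₀,
            Set.mul_mem_mul (by rw [Set.mem_star, star_star]; exact ha₁) ha₀,
            dom_mul hE h₁ h₀⟩
        have hy : (star a₀ * b) ∈ upcl E (star U * U) :=
          ⟨star a₁ * b₀,
            Set.mul_mem_mul (by rw [Set.mem_star, star_star]; exact ha₁) hb₀,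
            dom_mul hE h₁ hb₀b⟩
        obtain ⟨z, hzV, hzx, hzy⟩ := (hV _ _).mp ⟨hx, hy⟩
        obtain ⟨t, htUU, htz⟩ := hzV
        rw [Set.mem_mul] at htUU
        obtain ⟨sp, hsp, s, hs, rfl⟩ := htUU
        have htx : Sdom E (sp * s) (star a₀ * a) := dom_trans hE htz hzx
        have hty : Sdom E (sp * s) (star a₀ * b) := dom_trans hE htz hzy
        have hca : Sdom E (a₀ * (sp * s)) a := dom_act hE h₀ htx htx
        have hcb : Sdom E (a₀ * (sp * s)) b := dom_act hE h₀ htx hty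
        have hcU : a₀ * (sp * s) ∈ U := by
          apply htriple
          rw [← mul_assoc]
          exact Set.mul_mem_mul (Set.mul_mem_mul ha₀ hsp) hs
        exact ⟨a₀ * (sp * s), hcU, hca, hcb⟩
      · rintro ⟨c, hc, h1, h2⟩
        constructor
        · rw [hupcl]; exact ⟨c, hc, h1⟩
        · rw [hupcl]; exact ⟨c, hc, h2⟩
end

section
/- Let A be a unital *-ring such that pq ∈ A_Σ whenever p, q ∈ A_Σ and (pq)* = pq. Then ‖aa*‖ ≤ ⌈aa*⌉ for every a ∈ A. If moreover 1 + bb* is invertible in A for every b ∈ A, then for every a ∈ A with ‖a‖ < ∞ one has ‖aa*‖ = ⌈aa*⌉ = ‖a‖². -/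
open scoped ENNReal

/-- `B_Σ`: the set of finite sums `p₁ + ⋯ + p_k` (`k ≥ 1`) with each `pᵢ = bᵢbᵢ*`
for some `bᵢ ∈ B`. -/
def starSums {A : Type*} [NonUnitalRing A] [StarRing A] (B : Set A) : Set A :=
  {x | ∃ (n : ℕ) (f : Fin (n + 1) → A), (∀ i, f i ∈ B) ∧ x = ∑ i, f i * star (f i)}

/-- `⌈a⌉ = sup_b inf {m/n : m(bb*) − n(bab*) ∈ A_Σ}` computed in `[0,∞]`. -/
noncomputable def ceil' {A : Type*} [NonUnitalRing A] [StarRing A] (a : A) : ℝ≥0∞ :=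
  ⨆ b : A, sInf {q : ℝ≥0∞ | ∃ m n : ℕ, 0 < m ∧ 0 < n ∧ q = (m : ℝ≥0∞) / (n : ℝ≥0∞) ∧
    m • (b * star b) - n • (b * a * star b) ∈ starSums (Set.univ : Set A)}

/-- `‖a‖ = √(max(⌈aa*⌉, ⌈a*a⌉))` computed in `[0,∞]`. -/
noncomputable def rnorm' {A : Type*} [NonUnitalRing A] [StarRing A] (a : A) : ℝ≥0∞ :=
  (max (ceil' (a * star a)) (ceil' (star a * a))) ^ (1 / 2 : ℝ)

/-! ### Auxiliary lemmas about `starSums` -/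

section Sig
variable {A : Type*} [Ring A] [StarRing A]

private lemma sig_zero : (0:A) ∈ starSums (Set.univ : Set A) :=
  ⟨0, fun _ => 0, fun _ => trivial, by simp⟩

private lemma sig_single (b : A) : b * star b ∈ starSums (Set.univ : Set A) :=
  ⟨0, fun _ => b, fun _ => trivial, by simp⟩

private lemma sig_cons {p : A} (hp : p ∈ starSums (Set.univ : Set A)) (b : A) :
    b * star b + p ∈ starSums (Set.univ : Set A) := by
  obtain ⟨n, f, -, rfl⟩ := hp
  exact ⟨n+1, Fin.cons b f, fun _ => trivial, by simp [Fin.sum_univ_succ]⟩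

private lemma sig_sum_add : ∀ (n : ℕ) (f : Fin (n+1) → A) (q : A),
    q ∈ starSums (Set.univ : Set A) →
    (∑ i, f i * star (f i)) + q ∈ starSums (Set.univ : Set A)
  | 0, f, q, hq => by simpa using sig_cons hq (f 0)
  | (n+1), f, q, hq => by
      rw [Fin.sum_univ_succ, add_assoc]
      exact sig_cons (sig_sum_add n (fun i => f i.succ) q hq) (f 0)

private lemma sig_add {p q : A} (hp : p ∈ starSums (Set.univ : Set A))
    (hq : q ∈ starSums (Set.univ : Set A)) : p + q ∈ starSums (Set.univ : Set A) := by
  obtain ⟨n, f, -, rfl⟩ := hp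
  exact sig_sum_add n f q hq

private lemma sig_smul (k : ℕ) {p : A} (hp : p ∈ starSums (Set.univ : Set A)) :
    k • p ∈ starSums (Set.univ : Set A) := by
  induction k with
  | zero => simpa using sig_zero
  | succ k ih => rw [succ_nsmul]; exact sig_add ih hp

private lemma sig_conj {p : A} (hp : p ∈ starSums (Set.univ : Set A)) (c : A) :
    c * p * star c ∈ starSums (Set.univ : Set A) := by
  obtain ⟨n, f, -, rfl⟩ := hp
  refine ⟨n, fun i => c * f i, fun _ => trivial, ?_⟩
  rw [Finset.mul_sum, Finset.sum_mul]
  exact Finset.sum_congr rfl fun i _ => by rw [star_mul]; simp [mul_assoc]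

end Sig

/-! ### Auxiliary lemmas about `ℝ≥0∞` -/

private lemma frac_le_frac_iff {a b c d : ℕ} (hb : 0 < b) (hd : 0 < d) :
    (a : ℝ≥0∞) / b ≤ (c : ℝ≥0∞) / d ↔ a * d ≤ c * b := by
  rw [ENNReal.div_le_iff (by exact_mod_cast hb.ne' : (b:ℝ≥0∞) ≠ 0) (ENNReal.natCast_ne_top b),
      div_eq_mul_inv, mul_right_comm, ← div_eq_mul_inv,
      ENNReal.le_div_iff_mul_le (Or.inl (by exact_mod_cast hd.ne' : (d:ℝ≥0∞) ≠ 0))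
        (Or.inl (ENNReal.natCast_ne_top d)), ← Nat.cast_mul, ← Nat.cast_mul, Nat.cast_le]

private lemma frac_mul_frac (a b c d : ℕ) :
    ((a:ℝ≥0∞)/b) * ((c:ℝ≥0∞)/d) = ((a*c : ℕ):ℝ≥0∞)/((b*d : ℕ):ℝ≥0∞) := by
  have hinv : ((b:ℝ≥0∞) * d)⁻¹ = (b:ℝ≥0∞)⁻¹ * (d:ℝ≥0∞)⁻¹ :=
    ENNReal.mul_inv (Or.inr (ENNReal.natCast_ne_top d)) (Or.inl (ENNReal.natCast_ne_top b))
  push_cast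
  rw [div_eq_mul_inv, div_eq_mul_inv, div_eq_mul_inv, hinv, mul_mul_mul_comm]

private lemma rat_toNNReal_eq (q : ℚ) (hq : 0 ≤ q) :
    ((Real.toNNReal (q:ℝ)) : ℝ≥0∞) = (q.num.toNat : ℝ≥0∞) / (q.den : ℝ≥0∞) := by
  rw [ENNReal.eq_div_iff (by exact_mod_cast q.den_nz : (q.den:ℝ≥0∞) ≠ 0)
      (ENNReal.natCast_ne_top _)]
  rw [← ENNReal.coe_natCast q.den, ← ENNReal.coe_natCast q.num.toNat, mul_comm,
      ← ENNReal.coe_mul, ENNReal.coe_inj]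
  apply NNReal.coe_injective
  push_cast
  rw [Real.coe_toNNReal _ (by exact_mod_cast hq)]
  have h1 : ((q.num.toNat : ℤ) : ℚ) = (q.num : ℚ) := by
    exact_mod_cast Int.toNat_of_nonneg (Rat.num_nonneg.2 hq)
  have h2 : q * q.den = ((q.num.toNat : ℤ) : ℚ) := by
    rw [h1]; exact_mod_cast Rat.mul_den_eq_num q
  exact_mod_cast congrArg (Rat.cast : ℚ → ℝ) h2

private lemma exists_frac_btwn' {α β : ℝ≥0∞} (hab : α < β) :
    ∃ m n : ℕ, 0 < m ∧ 0 < n ∧ α < (m:ℝ≥0∞)/n ∧ (m:ℝ≥0∞)/n < β := by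
  obtain ⟨q, hq0, haq, hqb⟩ := ENNReal.lt_iff_exists_rat_btwn.1 hab
  have hqpos : 0 < q := by
    by_contra hq; push_neg at hq
    rw [Real.toNNReal_of_nonpos (by exact_mod_cast hq)] at haq
    simp at haq
  rw [rat_toNNReal_eq q hq0] at haq hqb
  exact ⟨q.num.toNat, q.den, by have := Rat.num_pos.2 hqpos; omega, q.pos, haq, hqb⟩

private lemma sq_half_mul (t : ℝ≥0∞) : t ^ (1/2 : ℝ) * t ^ (1/2 : ℝ) = t := by
  rw [← ENNReal.rpow_add_of_nonneg _ _ (by norm_num) (by norm_num)]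
  norm_num

private lemma half_sq (t : ℝ≥0∞) : (t * t) ^ (1/2 : ℝ) = t := by
  have h : t * t = t ^ (2:ℝ) := by
    rw [show (2:ℝ) = ((2:ℕ):ℝ) by norm_num, ENNReal.rpow_natCast, pow_two]
  rw [h, ← ENNReal.rpow_mul]
  norm_num

private lemma exists_sq_frac_btwn {α β : ℝ≥0∞} (hab : α < β) :
    ∃ m n : ℕ, 0 < m ∧ 0 < n ∧ α < ((m:ℝ≥0∞)/n) * ((m:ℝ≥0∞)/n) ∧
      ((m:ℝ≥0∞)/n) * ((m:ℝ≥0∞)/n) < β := by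
  have h2 : α ^ (1/2:ℝ) < β ^ (1/2:ℝ) := ENNReal.rpow_lt_rpow hab (by norm_num)
  obtain ⟨m, n, hm, hn, h3, h4⟩ := exists_frac_btwn' h2
  refine ⟨m, n, hm, hn, ?_, ?_⟩
  · calc α = α^(1/2:ℝ) * α^(1/2:ℝ) := (sq_half_mul α).symm
      _ < _ := ENNReal.mul_lt_mul h3 h3
  · calc ((m:ℝ≥0∞)/n) * ((m:ℝ≥0∞)/n) < β^(1/2:ℝ) * β^(1/2:ℝ) := ENNReal.mul_lt_mul h4 h4
      _ = β := sq_half_mul β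

private lemma le_mul_self_of_forall {s t : ℝ≥0∞}
    (H : ∀ m n : ℕ, 0 < m → 0 < n → t < (m:ℝ≥0∞)/n →
      s ≤ ((m:ℝ≥0∞)/n) * ((m:ℝ≥0∞)/n)) : s ≤ t * t := by
  by_contra hc
  push_neg at hc
  obtain ⟨m, n, hm, hn, h1, h2⟩ := exists_sq_frac_btwn hc
  have ht : t < (m:ℝ≥0∞)/n := by
    by_contra ht
    push_neg at ht
    exact absurd (mul_le_mul' ht ht) (not_le.2 h1)
  exact absurd (H m n hm hn ht) (not_le.2 h2)

private lemma mul_self_le_of_forall {s t : ℝ≥0∞}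
    (H : ∀ m n : ℕ, 0 < m → 0 < n → s < ((m:ℝ≥0∞)/n) * ((m:ℝ≥0∞)/n) →
      t ≤ (m:ℝ≥0∞)/n) : t * t ≤ s := by
  by_contra hc
  push_neg at hc
  obtain ⟨m, n, hm, hn, h1, h2⟩ := exists_sq_frac_btwn hc
  have := H m n hm hn h1
  exact absurd (mul_le_mul' this this) (not_le.2 h2)

private lemma le_mul_of_forall_frac_lt {v K s : ℝ≥0∞} (hs : s ≠ ⊤) (hK : K ≠ ⊤)
    (H : ∀ m n : ℕ, 0 < m → 0 < n → s < (m:ℝ≥0∞)/n → v ≤ ((m:ℝ≥0∞)/n) * K) :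
    v ≤ s * K := by
  rcases eq_or_ne K 0 with rfl | hK0
  · have hlt : s < s + 1 := ENNReal.lt_add_right hs one_ne_zero
    obtain ⟨m, n, hm, hn, h1, -⟩ := exists_frac_btwn' hlt
    simpa using H m n hm hn h1
  · refine ENNReal.le_of_forall_pos_le_add fun ε hε _ => ?_
    have hδ : (0:ℝ≥0∞) < (ε:ℝ≥0∞) / K := ENNReal.div_pos (by exact_mod_cast hε.ne') hK
    have hlt : s < s + (ε:ℝ≥0∞)/K := ENNReal.lt_add_right hs hδ.ne'
    obtain ⟨m, n, hm, hn, h1, h2⟩ := exists_frac_btwn' hlt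
    calc v ≤ ((m:ℝ≥0∞)/n) * K := H m n hm hn h1
      _ ≤ (s + (ε:ℝ≥0∞)/K) * K := mul_le_mul_left h2.le K
      _ = s * K + ((ε:ℝ≥0∞)/K) * K := add_mul _ _ _
      _ = s * K + ε := by rw [ENNReal.div_mul_cancel hK0 hK]

/-! ### The relation `m • (c c*) - n • (c x c*) ∈ A_Σ` and `ceil'` -/

private def Mem' {A : Type*} [Ring A] [StarRing A] (x : A) (m n : ℕ) (c : A) : Prop :=
  m • (c * star c) - n • (c * x * star c) ∈ starSums (Set.univ : Set A)

section MemCeil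
variable {A : Type*} [Ring A] [StarRing A]

private lemma ceil'_le_of_forall_mem {x : A} {m n : ℕ} (hm : 0 < m) (hn : 0 < n)
    (hmem : ∀ c : A, Mem' x m n c) : ceil' x ≤ (m:ℝ≥0∞)/n := by
  rw [ceil']
  exact iSup_le fun c => sInf_le ⟨m, n, hm, hn, rfl, hmem c⟩

private lemma exists_mem_of_ceil'_lt {x : A} {m n : ℕ} (hn : 0 < n)
    (hlt : ceil' x < (m:ℝ≥0∞)/n) (c : A) :
    ∃ M N : ℕ, 0 < M ∧ 0 < N ∧ M * n ≤ m * N ∧ Mem' x M N c := by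
  rw [ceil'] at hlt
  have h2 := lt_of_le_of_lt (le_iSup _ c) hlt
  rw [sInf_lt_iff] at h2
  obtain ⟨q, ⟨M, N, hM, hN, rfl, hmem⟩, hq⟩ := h2
  exact ⟨M, N, hM, hN, (frac_le_frac_iff hN hn).1 hq.le, hmem⟩

/-- The key use of the product hypothesis: squaring. -/
private lemma mem_sq
    (h : ∀ p ∈ starSums (Set.univ : Set A), ∀ q ∈ starSums (Set.univ : Set A),
      star (p * q) = p * q → p * q ∈ starSums (Set.univ : Set A))
    {x : A} (hx : star x = x) (hxS : x ∈ starSums (Set.univ : Set A))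
    {M N M₁ N₁ : ℕ} {c : A}
    (h1 : Mem' x M N c) (hone : Mem' x M₁ N₁ 1) :
    Mem' (x*x) (M₁*M) (N*N₁) c := by
  have hu : M₁ • (1:A) - N₁ • x ∈ starSums (Set.univ : Set A) := by
    have := hone
    simp only [Mem', one_mul, star_one, mul_one] at this
    exact this
  have hxu : x * (M₁ • (1:A) - N₁ • x) = M₁ • x - N₁ • (x * x) := by
    rw [mul_sub, mul_smul_comm, mul_smul_comm, mul_one]
  have hw : M₁ • x - N₁ • (x * x) ∈ starSums (Set.univ : Set A) := by
    rw [← hxu]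
    refine h x hxS _ hu ?_
    rw [hxu, star_sub, star_nsmul, star_nsmul, star_mul, hx]
  simp only [Mem'] at h1 ⊢
  have key : (M₁*M) • (c * star c) - (N*N₁) • (c * (x*x) * star c)
      = M₁ • (M • (c * star c) - N • (c * x * star c))
        + N • (c * (M₁ • x - N₁ • (x * x)) * star c) := by
    simp only [mul_sub, sub_mul, mul_smul_comm, smul_mul_assoc, smul_sub, smul_smul, mul_assoc]
    module
  rw [key]
  exact sig_add (sig_smul M₁ h1) (sig_smul N (sig_conj hw c))

/-- The quadratic trick: from a bound on `x²` to a bound on self-adjoint `x`. -/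
private lemma mem_of_sq_mem {x : A} (hx : star x = x) (m n : ℕ) {M N : ℕ} {c : A}
    (h1 : Mem' (x*x) M N c) :
    Mem' x (N*(m*m) + M*(n*n)) (2*(N*(m*n))) c := by
  set t := m • (1:A) - n • x with ht
  have hts : star (c * t) = t * star c := by
    rw [star_mul]
    congr 1
    rw [ht, star_sub, star_nsmul, star_nsmul, star_one, hx]
  have hsq : (c*t) * (t * star c) ∈ starSums (Set.univ : Set A) := by
    have := sig_single (c*t)
    rwa [hts] at this
  simp only [Mem'] at h1 ⊢
  have key : (N*(m*m) + M*(n*n)) • (c * star c) - (2*(N*(m*n))) • (c * x * star c)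
      = N • ((c * t) * (t * star c))
        + (n*n) • (M • (c * star c) - N • (c * (x*x) * star c)) := by
    rw [ht]
    simp only [mul_sub, sub_mul, mul_smul_comm, smul_mul_assoc, smul_sub, smul_smul,
      mul_one, one_mul, mul_assoc]
    module
  rw [key]
  exact sig_add (sig_smul N hsq) (sig_smul (n*n) h1)

/-- Conjugation bound: combining bounds on `x` (at `c a*`) and on `a* a` (at `c`). -/
private lemma mem_conj {x : A} (a : A) {M N M' N' : ℕ} {c : A}
    (h1 : Mem' x M N (c * star a)) (h2 : Mem' (star a * a) M' N' c) :
    Mem' (star a * x * a) (M*M') (N*N') c := by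
  have he : star (c * star a) = a * star c := by rw [star_mul, star_star]
  simp only [Mem', he] at h1 h2 ⊢
  have key : (M*M') • (c * star c) - (N*N') • (c * (star a * x * a) * star c)
      = N' • (M • ((c * star a) * (a * star c)) - N • ((c * star a) * x * (a * star c)))
        + M • (M' • (c * star c) - N' • (c * (star a * a) * star c)) := by
    simp only [mul_sub, sub_mul, mul_smul_comm, smul_mul_assoc, smul_sub, smul_smul, mul_assoc]
    module
  rw [key]
  exact sig_add (sig_smul N' h1) (sig_smul M h2)

/-! ### The three main `ceil'` estimates -/

private lemma ceil'_sq_le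
    (h : ∀ p ∈ starSums (Set.univ : Set A), ∀ q ∈ starSums (Set.univ : Set A),
      star (p * q) = p * q → p * q ∈ starSums (Set.univ : Set A))
    {x : A} (hx : star x = x) (hxS : x ∈ starSums (Set.univ : Set A)) :
    ceil' (x*x) ≤ ceil' x * ceil' x := by
  apply le_mul_self_of_forall
  intro m n hm hn hlt
  obtain ⟨M₁, N₁, hM₁, hN₁, hle₁, hone⟩ := exists_mem_of_ceil'_lt hn hlt 1
  rw [frac_mul_frac, ceil']
  refine iSup_le fun c => ?_
  obtain ⟨M, N, hM, hN, hle, hmem⟩ := exists_mem_of_ceil'_lt hn hlt c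
  have hm2 := mem_sq h hx hxS hmem hone
  refine le_trans (sInf_le ⟨M₁*M, N*N₁, Nat.mul_pos hM₁ hM, Nat.mul_pos hN hN₁, rfl, hm2⟩) ?_
  refine (frac_le_frac_iff (Nat.mul_pos hN hN₁) (Nat.mul_pos hn hn)).2 ?_
  calc (M₁*M)*(n*n) = (M₁*n)*(M*n) := by ring
    _ ≤ (m*N₁)*(m*N) := Nat.mul_le_mul hle₁ hle
    _ = (m*m)*(N*N₁) := by ring

private lemma le_ceil'_sq {x : A} (hx : star x = x) :
    ceil' x * ceil' x ≤ ceil' (x*x) := by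
  apply mul_self_le_of_forall
  intro m n hm hn hlt
  rw [frac_mul_frac] at hlt
  have hn2 : 0 < n*n := Nat.mul_pos hn hn
  rw [ceil']
  refine iSup_le fun c => ?_
  obtain ⟨M, N, hM, hN, hle, hmem⟩ := exists_mem_of_ceil'_lt hn2 hlt c
  have hm2 := mem_of_sq_mem hx m n hmem
  have hKpos : 0 < N*(m*m) + M*(n*n) := by positivity
  have hLpos : 0 < 2*(N*(m*n)) := by positivity
  refine le_trans (sInf_le ⟨_, _, hKpos, hLpos, rfl, hm2⟩) ?_
  refine (frac_le_frac_iff hLpos hn).2 ?_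
  nlinarith [hle, hn, hm]

private lemma ceil'_conj_le (a : A) {x : A}
    (hxt : ceil' x ≠ ⊤) (hyt : ceil' (star a * a) ≠ ⊤) :
    ceil' (star a * x * a) ≤ ceil' x * ceil' (star a * a) := by
  refine le_mul_of_forall_frac_lt hxt hyt fun m n hm hn hlt => ?_
  rw [mul_comm]
  have hfr : ((m:ℝ≥0∞)/n) ≠ ⊤ :=
    (ENNReal.div_lt_top (ENNReal.natCast_ne_top m) (by exact_mod_cast hn.ne')).ne
  refine le_mul_of_forall_frac_lt hyt hfr fun m' n' hm' hn' hlt' => ?_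
  rw [ceil']
  refine iSup_le fun c => ?_
  obtain ⟨M, N, hM, hN, hle, hmem⟩ := exists_mem_of_ceil'_lt hn hlt (c * star a)
  obtain ⟨M', N', hM', hN', hle', hmem'⟩ := exists_mem_of_ceil'_lt hn' hlt' c
  have hm2 := mem_conj a hmem hmem'
  refine le_trans (sInf_le ⟨_, _, Nat.mul_pos hM hM', Nat.mul_pos hN hN', rfl, hm2⟩) ?_
  have : ((M*M' : ℕ):ℝ≥0∞)/((N*N' : ℕ):ℝ≥0∞) ≤ ((m*m' : ℕ):ℝ≥0∞)/((n*n' : ℕ):ℝ≥0∞) := by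
    refine (frac_le_frac_iff (Nat.mul_pos hN hN') (Nat.mul_pos hn hn')).2 ?_
    calc (M*M')*(n*n') = (M*n)*(M'*n') := by ring
      _ ≤ (m*N)*(m'*N') := Nat.mul_le_mul hle hle'
      _ = (m*m')*(N*N') := by ring
  refine le_trans this ?_
  rw [← frac_mul_frac, mul_comm]

end MemCeil

theorem stmt11 {A : Type*} [Ring A] [StarRing A]
    (h : ∀ p ∈ starSums (Set.univ : Set A), ∀ q ∈ starSums (Set.univ : Set A),
      star (p * q) = p * q → p * q ∈ starSums (Set.univ : Set A)) :
    (∀ a : A, rnorm' (a * star a) ≤ ceil' (a * star a)) ∧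
    ((∀ b : A, IsUnit (1 + b * star b)) →
      ∀ a : A, rnorm' a ≠ ⊤ →
        rnorm' (a * star a) = ceil' (a * star a) ∧
        ceil' (a * star a) = rnorm' a * rnorm' a) := by
  have hstar : ∀ a : A, star (a * star a) = a * star a := fun a => by
    rw [star_mul, star_star]
  have hnorm : ∀ a : A, rnorm' (a * star a)
      = (ceil' ((a * star a) * (a * star a))) ^ (1/2 : ℝ) := by
    intro a
    rw [rnorm', hstar a, max_self]
  constructor
  · intro a
    rw [hnorm a]
    calc (ceil' ((a * star a) * (a * star a))) ^ (1/2 : ℝ)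
        ≤ (ceil' (a * star a) * ceil' (a * star a)) ^ (1/2 : ℝ) :=
          ENNReal.rpow_le_rpow (ceil'_sq_le h (hstar a) (sig_single a)) (by norm_num)
      _ = ceil' (a * star a) := half_sq _
  · intro _ a hfin
    have hxy : max (ceil' (a * star a)) (ceil' (star a * a)) ≠ ⊤ := by
      intro hmax
      apply hfin
      rw [rnorm', hmax]
      exact ENNReal.top_rpow_of_pos (by norm_num)
    have hxt : ceil' (a * star a) ≠ ⊤ := ne_top_of_le_ne_top hxy (le_max_left _ _)
    have hyt : ceil' (star a * a) ≠ ⊤ := ne_top_of_le_ne_top hxy (le_max_right _ _)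
    have hy : star (star a * a) = star a * a := by rw [star_mul, star_star]
    have hyS : star a * a ∈ starSums (Set.univ : Set A) := by
      have := sig_single (star a)
      rwa [star_star] at this
    have hyyx : (star a * a) * (star a * a) = star a * (a * star a) * a := by
      simp [mul_assoc]
    have e1 : ceil' (star a * a) * ceil' (star a * a)
        ≤ ceil' ((star a * a) * (star a * a)) := le_ceil'_sq hy
    have e2 : ceil' ((star a * a) * (star a * a))
        ≤ ceil' (a * star a) * ceil' (star a * a) := by
      rw [hyyx]
      exact ceil'_conj_le a hxt hyt
    have hylex : ceil' (star a * a) ≤ ceil' (a * star a) := by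
      rcases eq_or_ne (ceil' (star a * a)) 0 with h0 | h0
      · simp [h0]
      · exact (ENNReal.mul_le_mul_iff_left h0 hyt).1 (e1.trans e2)
    have e3 : ceil' ((a * star a) * (a * star a))
        = ceil' (a * star a) * ceil' (a * star a) :=
      le_antisymm (ceil'_sq_le h (hstar a) (sig_single a)) (le_ceil'_sq (hstar a))
    constructor
    · rw [hnorm a, e3, half_sq]
    · rw [rnorm', sq_half_mul, max_eq_left hylex]
end
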